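/- arXiv:1807.07531 — 8 statements merged into one kernel-verified Lean document; each statement's English description precedes it below -/
import Mathlib

section
/- If g : ℝⁿ → ℝ is convex and β-smooth (g(x) − (β/2)‖x‖² is concave), then its Fenchel conjugate g* is (1/β)-strongly convex on its domain. -/
open scoped RealInnerProductSpace

/-- The Fenchel conjugate (real-valued; meaningful on the domain where the supremum
is finite). -/
noncomputable def fenchel {n : ℕ} (g : EuclideanSpace ℝ (Fin n) → ℝ)
    (w : EuclideanSpace ℝ (Fin n)) : ℝ :=
  ⨆ x, (⟪w, x⟫ - g x)

set_option maxHeartbeats 1000000 in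
/-- If `g : ℝⁿ → ℝ` is convex and `β`-smooth (`g x - (β/2)‖x‖²` is concave), then its
Fenchel conjugate `g*` is `(1/β)`-strongly convex on its domain. -/
theorem stmt4 {n : ℕ} (g : EuclideanSpace ℝ (Fin n) → ℝ) (β : ℝ) (hβ : 0 < β)
    (hg : ConvexOn ℝ Set.univ g)
    (hsmooth : ConcaveOn ℝ Set.univ (fun x => g x - β / 2 * ‖x‖ ^ 2)) :
    ConvexOn ℝ {w : EuclideanSpace ℝ (Fin n) |
        BddAbove (Set.range fun x => ⟪w, x⟫ - g x)}
      (fun w => fenchel g w - 1 / (2 * β) * ‖w‖ ^ 2) := by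
  have key : ∀ (w₁ w₂ x : EuclideanSpace ℝ (Fin n)) (a b : ℝ), 0 ≤ a → 0 ≤ b → a + b = 1 →
      ⟪a • w₁ + b • w₂, x⟫ - g x - 1 / (2 * β) * ‖a • w₁ + b • w₂‖ ^ 2 ≤
        a * (⟪w₁, x + (b / β) • (w₁ - w₂)⟫ - g (x + (b / β) • (w₁ - w₂))
              - 1 / (2 * β) * ‖w₁‖ ^ 2)
        + b * (⟪w₂, x - (a / β) • (w₁ - w₂)⟫ - g (x - (a / β) • (w₁ - w₂))
              - 1 / (2 * β) * ‖w₂‖ ^ 2) := by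
    intro w₁ w₂ x a b ha hb hab
    set x₁ := x + (b / β) • (w₁ - w₂) with hx₁
    set x₂ := x - (a / β) • (w₁ - w₂) with hx₂
    have hmid : a • x₁ + b • x₂ = x := by
      have h : a • x₁ + b • x₂ = (a + b) • x + (a * (b/β) - b * (a/β)) • (w₁ - w₂) := by
        rw [hx₁, hx₂]; module
      rw [h, hab, show a * (b/β) - b * (a/β) = 0 by ring, one_smul, zero_smul, add_zero]
    have hconv := (hsmooth.neg).2 (Set.mem_univ x₁) (Set.mem_univ x₂) ha hb hab
    simp only [Pi.neg_apply, smul_eq_mul] at hconv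
    rw [hmid] at hconv
    -- hconv : -(g x - β/2 * ‖x‖^2) ≤ a * -(g x₁ - β/2*‖x₁‖^2) + b * -(g x₂ - β/2*‖x₂‖^2)
    have e1 : ‖a • w₁ + b • w₂‖ ^ 2 =
        a^2 * ⟪w₁,w₁⟫ + 2*a*b*⟪w₁,w₂⟫ + b^2 * ⟪w₂,w₂⟫ := by
      rw [← real_inner_self_eq_norm_sq]
      rw [inner_add_add_self]
      simp only [real_inner_smul_left, real_inner_smul_right, real_inner_comm w₂ w₁]
      ring
    have e2 : ‖x₁‖ ^ 2 = ⟪x,x⟫ + 2*(b/β)*⟪x, w₁ - w₂⟫ + (b/β)^2 * ⟪w₁-w₂, w₁-w₂⟫ := by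
      rw [← real_inner_self_eq_norm_sq, hx₁, inner_add_add_self]
      simp only [real_inner_smul_left, real_inner_smul_right, real_inner_comm (w₁ - w₂) x]
      ring
    have e3 : ‖x₂‖ ^ 2 = ⟪x,x⟫ - 2*(a/β)*⟪x, w₁ - w₂⟫ + (a/β)^2 * ⟪w₁-w₂, w₁-w₂⟫ := by
      rw [← real_inner_self_eq_norm_sq, hx₂, sub_eq_add_neg, ← neg_smul, inner_add_add_self]
      simp only [real_inner_smul_left, real_inner_smul_right, real_inner_comm (w₁ - w₂) x]
      ring
    have e4 : ‖x‖^2 = ⟪x,x⟫ := (real_inner_self_eq_norm_sq x).symm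
    have e5 : ‖w₁‖^2 = ⟪w₁,w₁⟫ := (real_inner_self_eq_norm_sq w₁).symm
    have e6 : ‖w₂‖^2 = ⟪w₂,w₂⟫ := (real_inner_self_eq_norm_sq w₂).symm
    have e7 : ⟪a • w₁ + b • w₂, x⟫ = a * ⟪w₁,x⟫ + b * ⟪w₂,x⟫ := by
      simp only [inner_add_left, real_inner_smul_left]
    have e8 : ⟪w₁, x₁⟫ = ⟪w₁,x⟫ + (b/β) * (⟪w₁,w₁⟫ - ⟪w₁,w₂⟫) := by
      rw [hx₁]
      simp only [inner_add_right, inner_sub_right, real_inner_smul_right]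
    have e9 : ⟪w₂, x₂⟫ = ⟪w₂,x⟫ - (a/β) * (⟪w₁,w₂⟫ - ⟪w₂,w₂⟫) := by
      rw [hx₂]
      simp only [inner_sub_right, real_inner_smul_right, real_inner_comm w₂ w₁]
    have e10 : ⟪w₁ - w₂, w₁ - w₂⟫ = ⟪w₁,w₁⟫ - 2*⟪w₁,w₂⟫ + ⟪w₂,w₂⟫ := by
      rw [inner_sub_sub_self]
      simp only [real_inner_comm w₂ w₁]
      ring
    rw [e2, e3, e4, e10] at hconv
    rw [e1, e5, e6, e7, e8, e9]
    have hβ' : β ≠ 0 := ne_of_gt hβ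
    obtain rfl : b = 1 - a := by linarith
    set p := ⟪w₁,w₁⟫
    set q := ⟪w₁,w₂⟫
    set r := ⟪w₂,w₂⟫
    set u := ⟪x,x⟫
    set v := ⟪x, w₁ - w₂⟫
    set G := g x
    set G₁ := g x₁
    set G₂ := g x₂
    have this2 : a * (β/2 * (u + 2*((1-a)/β)*v + ((1-a)/β)^2 * (p - 2*q + r)))
        + (1-a) * (β/2 * (u - 2*(a/β)*v + (a/β)^2 * (p - 2*q + r))) - β/2*u
        = a*(1-a)*(p - 2*q + r)/(2*β) := by
      field_simp
      ring
    have hB : a * G₁ + (1-a) * G₂ - G ≤ a*(1-a)*(p - 2*q + r)/(2*β) := by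
      linarith [hconv, this2]
    have this3 : (a * (⟪w₁,x⟫ + ((1-a)/β) * (p - q) - G₁ - 1/(2*β)*p)
        + (1-a) * (⟪w₂,x⟫ - (a/β) * (q - r) - G₂ - 1/(2*β)*r))
        - (a * ⟪w₁,x⟫ + (1-a) * ⟪w₂,x⟫ - G
            - 1/(2*β) * (a^2*p + 2*a*(1-a)*q + (1-a)^2*r))
        = a*(1-a)*(p - 2*q + r)/(2*β) - (a * G₁ + (1-a) * G₂ - G) := by
      field_simp
      ring
    linarith [this3, hB]
  constructor
  · intro w₁ hw₁ w₂ hw₂ a b ha hb hab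
    simp only [Set.mem_setOf_eq] at hw₁ hw₂ ⊢
    refine ⟨a * fenchel g w₁ + b * fenchel g w₂ + 1/(2*β)*‖a•w₁+b•w₂‖^2
      - a*(1/(2*β)*‖w₁‖^2) - b*(1/(2*β)*‖w₂‖^2), ?_⟩
    rintro y ⟨x, rfl⟩
    have hk := key w₁ w₂ x a b ha hb hab
    have h1 : ⟪w₁, x + (b/β)•(w₁-w₂)⟫ - g (x + (b/β)•(w₁-w₂)) ≤ fenchel g w₁ :=
      le_ciSup hw₁ _
    have h2 : ⟪w₂, x - (a/β)•(w₁-w₂)⟫ - g (x - (a/β)•(w₁-w₂)) ≤ fenchel g w₂ :=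
      le_ciSup hw₂ _
    have h1' := mul_le_mul_of_nonneg_left h1 ha
    have h2' := mul_le_mul_of_nonneg_left h2 hb
    simp only
    nlinarith [h1', h2', hk]
  · intro w₁ hw₁ w₂ hw₂ a b ha hb hab
    simp only [Set.mem_setOf_eq] at hw₁ hw₂
    simp only [smul_eq_mul]
    have hbound : ∀ x : EuclideanSpace ℝ (Fin n), ⟪a•w₁+b•w₂, x⟫ - g x ≤
        a * (fenchel g w₁ - 1/(2*β)*‖w₁‖^2) + b * (fenchel g w₂ - 1/(2*β)*‖w₂‖^2)
        + 1/(2*β)*‖a•w₁+b•w₂‖^2 := by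
      intro x
      have hk := key w₁ w₂ x a b ha hb hab
      have h1 : ⟪w₁, x + (b/β)•(w₁-w₂)⟫ - g (x + (b/β)•(w₁-w₂)) ≤ fenchel g w₁ :=
        le_ciSup hw₁ _
      have h2 : ⟪w₂, x - (a/β)•(w₁-w₂)⟫ - g (x - (a/β)•(w₁-w₂)) ≤ fenchel g w₂ :=
        le_ciSup hw₂ _
      have h1' := mul_le_mul_of_nonneg_left h1 ha
      have h2' := mul_le_mul_of_nonneg_left h2 hb
      nlinarith [h1', h2', hk]
    have hsup : fenchel g (a•w₁+b•w₂) ≤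
        a * (fenchel g w₁ - 1/(2*β)*‖w₁‖^2) + b * (fenchel g w₂ - 1/(2*β)*‖w₂‖^2)
        + 1/(2*β)*‖a•w₁+b•w₂‖^2 := ciSup_le hbound
    linarith [hsup]
end

section
/- Strong duality: if g : ℝⁿ → ℝ is closed, proper, and strongly convex, and 𝒱 ⊆ ℝⁿ is a nonempty finite set, then min_{x ∈ ℝⁿ} (g(x) + max_{w ∈ 𝒱} ⟨w, x⟩) = max_{w ∈ conv(𝒱)} (−g*(−w)), and both optima are attained. -/
open scoped RealInnerProductSpace

/-!
The dual function `φ w = min_x (g x + ⟪w, x⟫) = -g*(-w)` is attained at a unique point `x w`,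
and `α`-strong convexity makes `w ↦ x w` Lipschitz with constant `1/α`. Let `w₀` maximize `φ` on
the compact set `conv 𝒱`. Since `x w` is the gradient of `φ` (Danskin), the first-order
condition at `w₀` reads `⟪v - w₀, x w₀⟫ ≤ 0` for `v ∈ 𝒱`, so `max_{v ∈ 𝒱} ⟪v, x w₀⟫ = ⟪w₀, x w₀⟫`.
Hence `x w₀` minimizes `g + max_{v ∈ 𝒱} ⟪v, ·⟫` and the two optimal values agree.
-/

open Set Filter Topology

section NormedSpace

variable {E : Type*} [NormedAddCommGroup E] [NormedSpace ℝ E] {f : E → ℝ} {m : ℝ}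

theorem StrongConvexOn.add_sq_norm_sub_le_of_isMinOn (hf : StrongConvexOn univ m f) {x₀ : E}
    (hx₀ : IsMinOn f univ x₀) (x : E) : f x₀ + m / 2 * ‖x - x₀‖ ^ 2 ≤ f x := by
  have hsegment : ∀ t ∈ Ioo (0 : ℝ) 1, f x₀ + (1 - t) * (m / 2 * ‖x - x₀‖ ^ 2) ≤ f x := by
    rintro t ⟨ht₀, ht₁⟩
    have hseg := hf.2 (mem_univ x) (mem_univ x₀) ht₀.le (sub_nonneg.2 ht₁.le) (add_sub_cancel t 1)
    have hmin := isMinOn_univ_iff.1 hx₀ (t • x + (1 - t) • x₀)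
    simp only [smul_eq_mul] at hseg
    nlinarith
  have hcont : Continuous fun t : ℝ => f x₀ + (1 - t) * (m / 2 * ‖x - x₀‖ ^ 2) := by fun_prop
  refine le_of_tendsto (x := 𝓝[>] (0 : ℝ))
    ((hcont.tendsto' 0 _ (by simp)).mono_left nhdsWithin_le_nhds) ?_
  filter_upwards [Ioo_mem_nhdsGT one_pos] using hsegment

theorem ConvexOn.exists_sub_mul_norm_le (hf : ConvexOn ℝ univ f) (hc : ContinuousAt f 0) :
    ∃ C, ∀ x, f 0 - 1 - C * ‖x‖ ≤ f x := by
  obtain ⟨δ, hδ, hball⟩ := Metric.continuousAt_iff.1 hc 1 one_pos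
  have hnear : ∀ y : E, ‖y‖ < δ → f 0 - 1 ≤ f y := fun y hy => by
    have := hball (by simpa using hy)
    rw [Real.dist_eq] at this
    linarith [neg_abs_le (f y - f 0)]
  refine ⟨2 / δ, fun x => ?_⟩
  rcases lt_or_ge ‖x‖ (δ / 2) with hx | hx
  · have := hnear x (by linarith)
    have : 0 ≤ 2 / δ * ‖x‖ := by positivity
    linarith
  · set t := δ / 2 / ‖x‖ with ht
    have hxpos : 0 < ‖x‖ := by linarith
    have ht₀ : 0 < t := by positivity
    have ht₁ : t ≤ 1 := by rw [ht, div_le_one hxpos]; exact hx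
    have hseg := hf.2 (mem_univ x) (mem_univ 0) ht₀.le (sub_nonneg.2 ht₁) (add_sub_cancel t 1)
    rw [smul_zero, add_zero, smul_eq_mul, smul_eq_mul] at hseg
    have hty : ‖t • x‖ < δ := by
      rw [norm_smul, Real.norm_of_nonneg ht₀.le, ht, div_mul_cancel₀ _ hxpos.ne']; linarith
    have hnt := hnear _ hty
    have htx : t * (2 / δ * ‖x‖) = 1 := by rw [ht]; field_simp
    nlinarith

end NormedSpace

section InnerProductSpace

variable {E : Type*} [NormedAddCommGroup E] [InnerProductSpace ℝ E] {f g : E → ℝ} {m : ℝ}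

theorem StrongConvexOn.add_inner (hg : StrongConvexOn univ m g) (w : E) :
    StrongConvexOn univ m fun x => g x + ⟪w, x⟫ := by
  have hlin : ConvexOn ℝ univ fun x : E => ⟪w, x⟫ := (innerₛₗ ℝ w).convexOn convex_univ
  have h := hg.add hlin.uniformConvexOn_zero
  rwa [add_zero] at h

theorem StrongConvexOn.continuous [FiniteDimensional ℝ E] (hf : StrongConvexOn univ m f) :
    Continuous f := by
  have hc := (strongConvexOn_iff_convex.1 hf).locallyLipschitz.continuous
  convert hc.add (by fun_prop : Continuous fun x : E => m / 2 * ‖x‖ ^ 2) using 1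
  ext x
  simp only [Pi.add_apply]
  ring

theorem StrongConvexOn.exists_isMinOn [FiniteDimensional ℝ E] (hf : StrongConvexOn univ m f)
    (hm : 0 < m) : ∃ x, IsMinOn f univ x := by
  have hconv := strongConvexOn_iff_convex.1 hf
  obtain ⟨C, hC⟩ := hconv.exists_sub_mul_norm_le hconv.locallyLipschitz.continuous.continuousAt
  simp only [norm_zero] at hC
  have hgrowth : Tendsto (fun r : ℝ => f 0 - 1 + r * (m / 2 * r - C)) atTop atTop :=
    tendsto_atTop_add_const_left _ _ <| tendsto_id.atTop_mul_atTop₀ <|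
      tendsto_atTop_add_const_right _ _ <| tendsto_id.const_mul_atTop (by positivity)
  have hcoercive : Tendsto f (cocompact E) atTop := by
    refine tendsto_atTop_mono (fun x => ?_) (hgrowth.comp tendsto_norm_cocompact_atTop)
    simp only [Function.comp_apply]
    nlinarith [hC x]
  obtain ⟨x, hx⟩ := hf.continuous.exists_forall_le hcoercive
  exact ⟨x, fun y _ => hx y⟩

theorem StrongConvexOn.mul_norm_sub_le_of_isMinOn (hg : StrongConvexOn univ m g)
    {w₁ w₂ x₁ x₂ : E}
    (h₁ : IsMinOn (fun x => g x + ⟪w₁, x⟫) univ x₁)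
    (h₂ : IsMinOn (fun x => g x + ⟪w₂, x⟫) univ x₂) :
    m * ‖x₁ - x₂‖ ≤ ‖w₁ - w₂‖ := by
  have hq₁ := (hg.add_inner w₁).add_sq_norm_sub_le_of_isMinOn h₁ x₂
  have hq₂ := (hg.add_inner w₂).add_sq_norm_sub_le_of_isMinOn h₂ x₁
  have hcs : ⟪w₁ - w₂, x₂ - x₁⟫ ≤ ‖w₁ - w₂‖ * ‖x₁ - x₂‖ := by
    rw [← norm_neg (x₁ - x₂), neg_sub]
    exact real_inner_le_norm _ _
  have hsq : m * ‖x₁ - x₂‖ ^ 2 ≤ ‖w₁ - w₂‖ * ‖x₁ - x₂‖ := by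
    rw [norm_sub_rev x₂ x₁] at hq₁
    simp only [inner_sub_left, inner_sub_right] at hcs
    nlinarith
  rcases (norm_nonneg (x₁ - x₂)).eq_or_lt with h | h
  · rw [← h, mul_zero]; exact norm_nonneg _
  · nlinarith

theorem StrongConvexOn.lipschitzWith_of_isMinOn (hg : StrongConvexOn univ m g) (hm : 0 < m)
    {x : E → E} (hx : ∀ w, IsMinOn (fun y => g y + ⟪w, y⟫) univ (x w)) :
    LipschitzWith (Real.toNNReal m⁻¹) x := by
  refine LipschitzWith.of_dist_le_mul fun w₁ w₂ => ?_
  rw [dist_eq_norm, dist_eq_norm, Real.coe_toNNReal _ (inv_nonneg.2 hm.le), inv_mul_eq_div,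
    le_div_iff₀' hm]
  exact hg.mul_norm_sub_le_of_isMinOn (hx w₁) (hx w₂)

theorem inner_sub_le_zero_of_isMaxOn {x : E → E}
    (hx : ∀ w, IsMinOn (fun y => g y + ⟪w, y⟫) univ (x w)) (hxc : Continuous x) {K : Set E}
    (hK : Convex ℝ K) {w₀ v : E} (hw₀ : w₀ ∈ K) (hv : v ∈ K)
    (hmax : IsMaxOn (fun w => g (x w) + ⟪w, x w⟫) K w₀) :
    ⟪v - w₀, x w₀⟫ ≤ 0 := by
  set w : ℝ → E := fun t => w₀ + t • (v - w₀)
  have hpos : ∀ t ∈ Ioo (0 : ℝ) 1, ⟪v - w₀, x (w t)⟫ ≤ 0 := by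
    rintro t ⟨ht₀, ht₁⟩
    have hwK : w t ∈ K := by
      simpa [w] using hK.add_smul_sub_mem hw₀ hv ⟨ht₀.le, ht₁.le⟩
    have hle : g (x (w t)) + ⟪w t, x (w t)⟫ ≤ g (x w₀) + ⟪w₀, x w₀⟫ := hmax hwK
    have hmin : g (x w₀) + ⟪w₀, x w₀⟫ ≤ g (x (w t)) + ⟪w₀, x (w t)⟫ := isMinOn_univ_iff.1 (hx w₀) _
    simp only [w, inner_add_left, real_inner_smul_left] at hle
    nlinarith
  have hcont : Continuous fun t => ⟪v - w₀, x (w t)⟫ := by fun_prop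
  refine le_of_tendsto (x := 𝓝[>] (0 : ℝ))
    ((hcont.tendsto' 0 _ (by simp [w])).mono_left nhdsWithin_le_nhds) ?_
  filter_upwards [Ioo_mem_nhdsGT one_pos] using hpos

theorem Finset.inner_le_sup'_of_mem_convexHull {V : Finset E} (hV : V.Nonempty) {w : E}
    (hw : w ∈ convexHull ℝ (V : Set E)) (x : E) : ⟪w, x⟫ ≤ V.sup' hV fun v => ⟪v, x⟫ := by
  obtain ⟨v, hv, hwv⟩ :=
    ((innerₗ E x).convexOn convex_univ).exists_ge_of_mem_convexHull (Set.subset_univ _) hw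
  rw [innerₗ_apply_apply, innerₗ_apply_apply, real_inner_comm w, real_inner_comm v] at hwv
  exact hwv.trans (V.le_sup' (fun v => ⟪v, x⟫) hv)

end InnerProductSpace

theorem neg_fenchel_neg_eq {n : ℕ} {g : EuclideanSpace ℝ (Fin n) → ℝ}
    {w x₀ : EuclideanSpace ℝ (Fin n)}
    (hx₀ : IsMinOn (fun x => g x + ⟪w, x⟫) univ x₀) : -fenchel g (-w) = g x₀ + ⟪w, x₀⟫ := by
  have hle : ∀ x, ⟪-w, x⟫ - g x ≤ -(g x₀ + ⟪w, x₀⟫) := fun x => by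
    rw [inner_neg_left]
    linarith [isMinOn_univ_iff.1 hx₀ x]
  have hattained : ⟪-w, x₀⟫ - g x₀ = -(g x₀ + ⟪w, x₀⟫) := by rw [inner_neg_left]; ring
  have hsup : fenchel g (-w) = -(g x₀ + ⟪w, x₀⟫) :=
    le_antisymm (ciSup_le hle) (hattained ▸ le_ciSup ⟨_, forall_mem_range.2 hle⟩ x₀)
  rw [hsup, neg_neg]

theorem stmt6_general {n : ℕ} (g : EuclideanSpace ℝ (Fin n) → ℝ)
    (hsc : ∃ α > (0 : ℝ), ConvexOn ℝ Set.univ (fun x => g x - α / 2 * ‖x‖ ^ 2))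
    (V : Finset (EuclideanSpace ℝ (Fin n))) (hV : V.Nonempty) :
    ∃ xstar : EuclideanSpace ℝ (Fin n),
      ∃ wstar ∈ convexHull ℝ (V : Set (EuclideanSpace ℝ (Fin n))),
        (∀ y, g xstar + V.sup' hV (fun w => ⟪w, xstar⟫) ≤
              g y + V.sup' hV (fun w => ⟪w, y⟫)) ∧
        (∀ w ∈ convexHull ℝ (V : Set (EuclideanSpace ℝ (Fin n))),
            -(fenchel g (-w)) ≤ -(fenchel g (-wstar))) ∧
        g xstar + V.sup' hV (fun w => ⟪w, xstar⟫) = -(fenchel g (-wstar)) := by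
  obtain ⟨α, hα, hconv⟩ := hsc
  have hg : StrongConvexOn univ α g := strongConvexOn_iff_convex.2 hconv
  choose x hx using fun w => (hg.add_inner w).exists_isMinOn hα
  have hxc : Continuous x := (hg.lipschitzWith_of_isMinOn hα hx).continuous
  have hdual : Continuous fun w => g (x w) + ⟪w, x w⟫ := by
    have := hg.continuous; fun_prop
  obtain ⟨w₀, hw₀, hmax⟩ := (V.finite_toSet.isCompact_convexHull ℝ).exists_isMaxOn
    hV.to_set.convexHull hdual.continuousOn
  have hsup : V.sup' hV (fun w => ⟪w, x w₀⟫) = ⟪w₀, x w₀⟫ := by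
    refine le_antisymm (Finset.sup'_le hV _ fun v hv => ?_)
      (V.inner_le_sup'_of_mem_convexHull hV hw₀ _)
    have := inner_sub_le_zero_of_isMaxOn hx hxc (convex_convexHull ℝ _) hw₀
      (subset_convexHull ℝ _ hv) hmax
    rwa [inner_sub_left, sub_nonpos] at this
  refine ⟨x w₀, w₀, hw₀, fun y => ?_, fun w hw => ?_, ?_⟩
  · rw [hsup]
    linarith [isMinOn_univ_iff.1 (hx w₀) y, V.inner_le_sup'_of_mem_convexHull hV hw₀ y]
  · rw [neg_fenchel_neg_eq (hx w), neg_fenchel_neg_eq (hx w₀)]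
    exact hmax hw
  · rw [neg_fenchel_neg_eq (hx w₀), hsup]

/-- Strong duality: if `g : ℝⁿ → ℝ` is closed, proper and strongly convex and `𝒱 ⊆ ℝⁿ`
is a nonempty finite set, then
`min_x (g x + max_{w ∈ 𝒱} ⟪w, x⟫) = max_{w ∈ conv 𝒱} (-g*(-w))` and both optima are
attained. -/
theorem stmt6 {n : ℕ} (g : EuclideanSpace ℝ (Fin n) → ℝ)
    (hlsc : LowerSemicontinuous g)
    (hsc : ∃ α > (0 : ℝ), ConvexOn ℝ Set.univ (fun x => g x - α / 2 * ‖x‖ ^ 2))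
    (V : Finset (EuclideanSpace ℝ (Fin n))) (hV : V.Nonempty) :
    ∃ xstar : EuclideanSpace ℝ (Fin n),
      ∃ wstar ∈ convexHull ℝ (V : Set (EuclideanSpace ℝ (Fin n))),
        (∀ y, g xstar + V.sup' hV (fun w => ⟪w, xstar⟫) ≤
              g y + V.sup' hV (fun w => ⟪w, y⟫)) ∧
        (∀ w ∈ convexHull ℝ (V : Set (EuclideanSpace ℝ (Fin n))),
            -(fenchel g (-w)) ≤ -(fenchel g (-wstar))) ∧
        g xstar + V.sup' hV (fun w => ⟪w, xstar⟫) = -(fenchel g (-wstar)) :=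
  stmt6_general g hsc V hV
end

section
/- Primal solution from dual: if g : ℝⁿ → ℝ is strongly convex and w⋆ maximizes −g*(−w) over conv(𝒱) for a nonempty finite set 𝒱 ⊆ ℝⁿ, then x⋆ = ∇g*(−w⋆) minimizes g(x) + max_{w ∈ 𝒱} ⟨w, x⟩ over ℝⁿ. -/
/-!
Strong convexity makes `x ↦ ⟪u, x⟫ - g x` coercive, so the supremum defining `g* u` is attained,
say at `z`. Then `g* ≥ g* u + ⟪z, · - u⟫` everywhere, so at `u = -w⋆`, where `g*` is
differentiable, `z` is the gradient `x⋆` and Fenchel–Young holds with equality at `x⋆`.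
The first-order condition for `w⋆` on `conv 𝒱` gives `⟪w, x⋆⟫ ≤ ⟪w⋆, x⋆⟫` for `w ∈ 𝒱`, so the
max term at `x⋆` is `⟪w⋆, x⋆⟫`, while for any `y`
`g y + max_𝒱 ⟪w, y⟫ ≥ g y + ⟪w⋆, y⟫ ≥ -g*(-w⋆) = g x⋆ + ⟪w⋆, x⋆⟫`.
-/

open scoped RealInnerProductSpace

open Set Filter

theorem ConvexOn.exists_neg_mul_norm_add_one_le {E : Type*} [NormedAddCommGroup E]
    [NormedSpace ℝ E] [FiniteDimensional ℝ E] {h : E → ℝ} (hh : ConvexOn ℝ univ h) :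
    ∃ C, ∀ x, -(C * (‖x‖ + 1)) ≤ h x := by
  have hcont : Continuous h := continuousOn_univ.mp (hh.continuousOn isOpen_univ)
  obtain ⟨m, hm⟩ := ((isCompact_closedBall (0 : E) 1).image hcont).bddBelow
  have hball : ∀ x, ‖x‖ ≤ 1 → m ≤ h x := fun x hx =>
    hm ⟨x, mem_closedBall_zero_iff.mpr hx, rfl⟩
  refine ⟨|m| + |h 0|, fun x => ?_⟩
  rcases le_or_gt ‖x‖ 1 with hx | hx
  · nlinarith [hball x hx, neg_abs_le m, abs_nonneg (h 0),
      mul_nonneg (add_nonneg (abs_nonneg m) (abs_nonneg (h 0))) (norm_nonneg x)]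
  -- `‖x‖⁻¹ • x` lies on the unit sphere and is a convex combination of `0` and `x`.
  set t := ‖x‖⁻¹
  have ht0 : 0 < t := by positivity
  have ht1 : t ≤ 1 := inv_le_one_of_one_le₀ hx.le
  have hsphere : m ≤ h (t • x) := hball _ (by
    rw [norm_smul, Real.norm_of_nonneg ht0.le, inv_mul_cancel₀ (by positivity)])
  have hcomb : h (t • x) ≤ (1 - t) * h 0 + t * h x := by
    simpa using hh.2 (mem_univ 0) (mem_univ x) (by linarith) ht0.le (by ring)
  have hxt : ‖x‖ * t = 1 := mul_inv_cancel₀ (by positivity)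
  have hlin : -(|m| + |h 0|) ≤ t * h x := by
    nlinarith [neg_abs_le m, le_abs_self (h 0), neg_abs_le (h 0)]
  have hx' : -((|m| + |h 0|) * ‖x‖) ≤ h x :=
    calc -((|m| + |h 0|) * ‖x‖) = ‖x‖ * -(|m| + |h 0|) := by ring
      _ ≤ ‖x‖ * (t * h x) := mul_le_mul_of_nonneg_left hlin (norm_nonneg x)
      _ = h x := by rw [← mul_assoc, hxt, one_mul]
  nlinarith [abs_nonneg m, abs_nonneg (h 0)]

section StronglyConvex

variable {E : Type*} [NormedAddCommGroup E] [InnerProductSpace ℝ E] [FiniteDimensional ℝ E]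
  {g : E → ℝ} {α : ℝ}

theorem tendsto_sub_inner_cocompact_of_convexOn_sub_sq (hα : 0 < α)
    (hg : ConvexOn ℝ univ (fun x => g x - α / 2 * ‖x‖ ^ 2)) (u : E) :
    Tendsto (fun x => g x - ⟪u, x⟫) (cocompact E) atTop := by
  obtain ⟨C, hC⟩ := hg.exists_neg_mul_norm_add_one_le
  set D := C + ‖u‖
  have hq : Tendsto (fun r : ℝ => r * (α / 2 * r - D) - C) atTop atTop :=
    tendsto_atTop_add_const_right _ _ <| tendsto_id.atTop_mul_atTop₀ <|
      tendsto_atTop_add_const_right _ _ <| tendsto_id.const_mul_atTop (by positivity)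
  refine tendsto_atTop_mono (fun x => ?_) (hq.comp tendsto_norm_cocompact_atTop)
  simp only [Function.comp_apply]
  nlinarith [hC x, real_inner_le_norm u x, norm_nonneg u, norm_nonneg x]

theorem exists_forall_inner_sub_le_of_convexOn_sub_sq (hα : 0 < α)
    (hg : ConvexOn ℝ univ (fun x => g x - α / 2 * ‖x‖ ^ 2)) (u : E) :
    ∃ z, ∀ x, ⟪u, x⟫ - g x ≤ ⟪u, z⟫ - g z := by
  have hgc : Continuous g := by
    have h := (continuousOn_univ.mp (hg.continuousOn isOpen_univ)).add
      (by fun_prop : Continuous fun x : E => α / 2 * ‖x‖ ^ 2)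
    exact h.congr fun x => sub_add_cancel _ _
  have hcont : Continuous fun x => g x - ⟪u, x⟫ :=
    hgc.sub (continuous_const.inner continuous_id)
  obtain ⟨z, hz⟩ := hcont.exists_forall_le (tendsto_sub_inner_cocompact_of_convexOn_sub_sq hα hg u)
  exact ⟨z, fun x => by linarith [hz x]⟩

end StronglyConvex

section FirstOrder

variable {E : Type*} [NormedAddCommGroup E] [InnerProductSpace ℝ E] [CompleteSpace E]
  {f : E → ℝ} {x z a : E}

theorem HasGradientAt.eq_of_forall_add_inner_le (hf : HasGradientAt f x a)
    (hz : ∀ p, f a + ⟪z, p - a⟫ ≤ f p) : x = z := by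
  have hmin : IsLocalMin (fun p => f p - ⟪z, p⟫) a :=
    IsMinOn.isLocalMin (fun p _ => by
      have := hz p
      rw [inner_sub_right] at this
      simp only [mem_ofPred_eq]
      linarith) univ_mem
  have hderiv := hmin.hasFDerivAt_eq_zero (hf.hasFDerivAt.sub (innerSL ℝ z).hasFDerivAt)
  refine ext_inner_left ℝ fun v => ?_
  have := DFunLike.congr_fun hderiv v
  simp only [sub_apply, InnerProductSpace.toDual_apply_apply,
    innerSL_apply_apply, zero_apply, sub_eq_zero] at this
  rw [real_inner_comm x v, real_inner_comm z v, this]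

theorem IsMinOn.inner_gradient_sub_nonneg {s : Set E} (hs : Convex ℝ s) (hmin : IsMinOn f s a)
    (hf : HasGradientAt f x a) {b : E} (ha : a ∈ s) (hb : b ∈ s) : 0 ≤ ⟪x, b - a⟫ := by
  simpa using hmin.localize.hasFDerivWithinAt_nonneg hf.hasFDerivAt.hasFDerivWithinAt
    (sub_mem_posTangentConeAt_of_segment_subset (hs.segment_subset ha hb))

end FirstOrder

section Fenchel

variable {n : ℕ} {g : EuclideanSpace ℝ (Fin n) → ℝ} {u z : EuclideanSpace ℝ (Fin n)}

theorem fenchel_eq_of_forall_le (hz : ∀ x, ⟪u, x⟫ - g x ≤ ⟪u, z⟫ - g z) :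
    fenchel g u = ⟪u, z⟫ - g z :=
  le_antisymm (ciSup_le hz) (le_ciSup ⟨_, forall_mem_range.2 hz⟩ z)

theorem inner_sub_le_fenchel {α : ℝ} (hα : 0 < α)
    (hg : ConvexOn ℝ univ (fun x => g x - α / 2 * ‖x‖ ^ 2)) (u x : EuclideanSpace ℝ (Fin n)) :
    ⟪u, x⟫ - g x ≤ fenchel g u := by
  obtain ⟨z, hz⟩ := exists_forall_inner_sub_le_of_convexOn_sub_sq hα hg u
  rw [fenchel_eq_of_forall_le hz]
  exact hz x

end Fenchel

theorem stmt7_general {n : ℕ} (g : EuclideanSpace ℝ (Fin n) → ℝ)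
    (hsc : ∃ α > (0 : ℝ), ConvexOn ℝ Set.univ (fun x => g x - α / 2 * ‖x‖ ^ 2))
    (V : Finset (EuclideanSpace ℝ (Fin n))) (hV : V.Nonempty)
    (wstar : EuclideanSpace ℝ (Fin n))
    (hwmem : wstar ∈ convexHull ℝ (V : Set (EuclideanSpace ℝ (Fin n))))
    (hwmax : ∀ w ∈ convexHull ℝ (V : Set (EuclideanSpace ℝ (Fin n))),
        -(fenchel g (-w)) ≤ -(fenchel g (-wstar)))
    (xstar : EuclideanSpace ℝ (Fin n))
    (hxgrad : HasGradientAt (fenchel g) xstar (-wstar)) :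
    ∀ y, g xstar + V.sup' hV (fun w => ⟪w, xstar⟫) ≤
         g y + V.sup' hV (fun w => ⟪w, y⟫) := by
  obtain ⟨α, hα, hg⟩ := hsc
  obtain ⟨z, hz⟩ := exists_forall_inner_sub_le_of_convexOn_sub_sq hα hg (-wstar)
  have hfz := fenchel_eq_of_forall_le hz
  have hzx : xstar = z := hxgrad.eq_of_forall_add_inner_le fun p => by
    have := inner_sub_le_fenchel hα hg p z
    rw [hfz, inner_sub_right]
    linarith [real_inner_comm z p, real_inner_comm z (-wstar)]
  subst hzx
  have hmin : IsMinOn (fenchel g) (-convexHull ℝ (V : Set _)) (-wstar) :=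
    isMinOn_iff.2 fun p hp => by simpa using hwmax (-p) hp
  have hopt : V.sup' hV (fun w => ⟪w, xstar⟫) ≤ ⟪wstar, xstar⟫ := by
    refine Finset.sup'_le _ _ fun w hw => ?_
    have := hmin.inner_gradient_sub_nonneg (convex_convexHull ℝ _).neg hxgrad
      (by simpa using hwmem) (by simpa using subset_convexHull ℝ _ hw : -w ∈ -convexHull ℝ _)
    rw [inner_sub_right, inner_neg_right, inner_neg_right, real_inner_comm w,
      real_inner_comm wstar] at this
    linarith
  intro y
  have hsup : ⟪wstar, y⟫ ≤ V.sup' hV (fun w => ⟪w, y⟫) :=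
    ((innerₛₗ ℝ).flip y).convexOn convex_univ |>.le_sup_of_mem_convexHull (subset_univ _) hwmem
  have := inner_sub_le_fenchel hα hg (-wstar) y
  rw [hfz, inner_neg_left, inner_neg_left] at this
  linarith

/-- Primal solution from dual: if `g : ℝⁿ → ℝ` is closed, proper and strongly convex and
`w⋆` maximizes `-g*(-w)` over `conv 𝒱` for a nonempty finite `𝒱 ⊆ ℝⁿ`, then
`x⋆ = ∇g*(-w⋆)` minimizes `g x + max_{w ∈ 𝒱} ⟪w, x⟫` over `ℝⁿ`. -/
theorem stmt7 {n : ℕ} (g : EuclideanSpace ℝ (Fin n) → ℝ)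
    (hlsc : LowerSemicontinuous g)
    (hsc : ∃ α > (0 : ℝ), ConvexOn ℝ Set.univ (fun x => g x - α / 2 * ‖x‖ ^ 2))
    (V : Finset (EuclideanSpace ℝ (Fin n))) (hV : V.Nonempty)
    (wstar : EuclideanSpace ℝ (Fin n))
    (hwmem : wstar ∈ convexHull ℝ (V : Set (EuclideanSpace ℝ (Fin n))))
    (hwmax : ∀ w ∈ convexHull ℝ (V : Set (EuclideanSpace ℝ (Fin n))),
        -(fenchel g (-w)) ≤ -(fenchel g (-wstar)))
    (xstar : EuclideanSpace ℝ (Fin n))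
    (hxgrad : HasGradientAt (fenchel g) xstar (-wstar)) :
    ∀ y, g xstar + V.sup' hV (fun w => ⟪w, xstar⟫) ≤
         g y + V.sup' hV (fun w => ⟪w, y⟫) :=
  stmt7_general g hsc V hV wstar hwmem hwmax xstar hxgrad
end

section
/- Dual solution from primal: if g : ℝⁿ → ℝ is smooth (differentiable) and strongly convex, and x⋆ minimizes g(x) + max_{w ∈ 𝒱} ⟨w, x⟩ over ℝⁿ for a nonempty finite set 𝒱, then w⋆ = −∇g(x⋆) lies in conv(𝒱) and maximizes −g*(−w) over conv(𝒱). -/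
/-!
Write `σ(y) = max_{w ∈ V} ⟪w, y⟫` for the support function of `V`, a convex, sublinear function.
First-order optimality of `x⋆` for `g + σ` makes `u = -∇g(x⋆)` a subgradient of `σ` at `x⋆`.
By sublinearity this gives `⟪u, d⟫ ≤ σ(d)` for every `d`, which by separation is `u ∈ conv V`,
and, taking `y = 0`, `σ(x⋆) ≤ ⟪u, x⋆⟫`. Hence `⟪w, x⋆⟫ ≤ ⟪u, x⋆⟫` for every `w ∈ conv V`.
Since `x⋆` attains the supremum defining `g*(∇g(x⋆))`,
`g*(∇g(x⋆)) = ⟪∇g(x⋆), x⋆⟫ - g(x⋆) ≤ ⟪-w, x⋆⟫ - g(x⋆) ≤ g*(-w)`, where the last step needs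
strong convexity to keep the supremum defining `g*(-w)` finite.
-/

open scoped RealInnerProductSpace

open Set

theorem ConvexOn.apply_add_smul_sub_le {E : Type*} [AddCommGroup E] [Module ℝ E] {f : E → ℝ}
    (hconv : ConvexOn ℝ univ f) (x y : E) {t : ℝ} (ht : t ∈ Icc (0 : ℝ) 1) :
    f (x + t • (y - x)) ≤ f x + t * (f y - f x) := by
  have hxy : x + t • (y - x) = (1 - t) • x + t • y := by
    rw [smul_sub, sub_smul, one_smul]; abel
  have := hconv.2 (mem_univ x) (mem_univ y) (sub_nonneg.2 ht.2) ht.1 (sub_add_cancel 1 t)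
  rw [hxy]
  simp only [smul_eq_mul] at this
  linarith

section Gradient

variable {E : Type*} [NormedAddCommGroup E] [InnerProductSpace ℝ E] [CompleteSpace E]
  {f h : E → ℝ} {x G : E}

theorem HasGradientAt.hasDerivAt_add_smul (hf : HasGradientAt f G x) (d : E) :
    HasDerivAt (fun t : ℝ => f (x + t • d)) ⟪G, d⟫ 0 := by
  have hline : HasDerivAt (fun t : ℝ => x + t • d) d 0 := by
    simpa using ((hasDerivAt_id (0 : ℝ)).smul_const d).const_add x
  have hf' : HasFDerivAt f (InnerProductSpace.toDual ℝ E G) (x + (0 : ℝ) • d) := by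
    simpa using hasGradientAt_iff_hasFDerivAt.1 hf
  have := hf'.comp_hasDerivAt (0 : ℝ) hline
  simp only [InnerProductSpace.toDual_apply_apply] at this
  exact this

theorem HasGradientAt.inner_le_of_forall_le_add_mul {d : E} {c : ℝ} (hf : HasGradientAt f G x)
    (hle : ∀ t ∈ Icc (0 : ℝ) 1, f (x + t • d) ≤ f x + t * c) : ⟪G, d⟫ ≤ c := by
  have hmax : IsMaxOn (fun t : ℝ => f (x + t • d) - t * c) (Icc 0 1) 0 := fun t ht => by
    simpa using hle t ht
  have hderiv := ((hf.hasDerivAt_add_smul d).sub ((hasDerivAt_id (0 : ℝ)).mul_const c))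
  have hcone : (1 : ℝ) ∈ posTangentConeAt (Icc (0 : ℝ) 1) 0 :=
    mem_posTangentConeAt_of_segment_subset (by simp [segment_eq_Icc])
  have := hmax.localize.hasFDerivWithinAt_nonpos hderiv.hasFDerivAt.hasFDerivWithinAt hcone
  simp only [one_mul, ContinuousLinearMap.toSpanSingleton_apply, smul_eq_mul, tsub_le_iff_right,
    zero_add] at this
  linarith

theorem ConvexOn.inner_sub_le_of_hasGradientAt (hconv : ConvexOn ℝ univ f)
    (hf : HasGradientAt f G x) (y : E) : ⟪G, y - x⟫ ≤ f y - f x :=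
  hf.inner_le_of_forall_le_add_mul fun _ ht => hconv.apply_add_smul_sub_le x y ht

theorem IsMinOn.neg_inner_sub_le_of_hasGradientAt (hmin : IsMinOn (f + h) univ x)
    (hf : HasGradientAt f G x) (hconv : ConvexOn ℝ univ h) (y : E) :
    ⟪-G, y - x⟫ ≤ h y - h x := by
  have hneg : HasGradientAt (-f) (-G) x := by
    rw [hasGradientAt_iff_hasFDerivAt, map_neg]
    exact hf.hasFDerivAt.neg
  refine hneg.inner_le_of_forall_le_add_mul fun t ht => ?_
  have hopt : f x + h x ≤ f (x + t • (y - x)) + h (x + t • (y - x)) := hmin (mem_univ _)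
  have := hconv.apply_add_smul_sub_le x y ht
  simp only [Pi.neg_apply]
  linarith

theorem hasGradientAt_half_mul_norm_sq (α : ℝ) (x : E) :
    HasGradientAt (fun z : E => α / 2 * ‖z‖ ^ 2) (α • x) x := by
  rw [hasGradientAt_iff_hasFDerivAt]
  refine ((hasStrictFDerivAt_norm_sq x).hasFDerivAt.const_mul (α / 2)).congr_fderiv ?_
  ext z
  simp only [smul_apply, coe_innerSL_apply, nsmul_eq_mul, Nat.cast_ofNat,
    smul_eq_mul, map_smul, InnerProductSpace.toDual_apply_apply]
  ring

theorem StrongConvexOn.add_inner_sub_add_le {α : ℝ} (hsc : StrongConvexOn univ α f)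
    (hf : HasGradientAt f G x) (y : E) :
    f x + ⟪G, y - x⟫ + α / 2 * ‖y - x‖ ^ 2 ≤ f y := by
  have hgrad : HasGradientAt (fun z => f z - α / 2 * ‖z‖ ^ 2) (G - α • x) x := by
    rw [hasGradientAt_iff_hasFDerivAt, map_sub]
    exact hf.hasFDerivAt.sub (hasGradientAt_half_mul_norm_sq α x).hasFDerivAt
  have := (strongConvexOn_iff_convex.1 hsc).inner_sub_le_of_hasGradientAt hgrad y
  simp only [← real_inner_self_eq_norm_sq, inner_sub_left, inner_sub_right, real_inner_smul_left,
    real_inner_comm x y] at this ⊢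
  linarith

theorem StrongConvexOn.bddAbove_range_inner_sub {α : ℝ} (hsc : StrongConvexOn univ α f)
    (hα : 0 < α) (hf : HasGradientAt f G x) (v : E) :
    BddAbove (range fun y => ⟪v, y⟫ - f y) := by
  refine ⟨⟪v, x⟫ - f x + ‖v - G‖ ^ 2 / (2 * α), ?_⟩
  rintro _ ⟨y, rfl⟩
  have hquad := hsc.add_inner_sub_add_le hf y
  have hcs : ⟪v - G, y - x⟫ ≤ ‖v - G‖ * ‖y - x‖ := real_inner_le_norm _ _
  -- completing the square in `‖y - x‖`
  have hsq : ‖v - G‖ * ‖y - x‖ - α / 2 * ‖y - x‖ ^ 2 ≤ ‖v - G‖ ^ 2 / (2 * α) := by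
    rw [le_div_iff₀ (by positivity)]
    nlinarith [sq_nonneg (α * ‖y - x‖ - ‖v - G‖)]
  simp only [inner_sub_left, inner_sub_right] at hcs hquad ⊢
  linarith

end Gradient

namespace Finset

variable {E : Type*} [NormedAddCommGroup E] [InnerProductSpace ℝ E] {V : Finset E}
  (hV : V.Nonempty)

theorem sup'_inner_add_le (x y : E) :
    V.sup' hV (⟪·, x + y⟫) ≤ V.sup' hV (⟪·, x⟫) + V.sup' hV (⟪·, y⟫) :=
  sup'_le _ _ fun w hw => by
    rw [inner_add_right]
    exact add_le_add (le_sup' (⟪·, x⟫) hw) (le_sup' (⟪·, y⟫) hw)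

theorem convexOn_sup'_inner : ConvexOn ℝ Set.univ fun x => V.sup' hV (⟪·, x⟫) :=
  ⟨convex_univ, fun x _ y _ a b ha hb _ => sup'_le _ _ fun w hw => by
    rw [inner_add_right, real_inner_smul_right, real_inner_smul_right]
    exact add_le_add (mul_le_mul_of_nonneg_left (le_sup' (⟪·, x⟫) hw) ha)
      (mul_le_mul_of_nonneg_left (le_sup' (⟪·, y⟫) hw) hb)⟩

theorem mem_convexHull_iff_forall_inner_le_sup' [CompleteSpace E] {u : E} :
    u ∈ convexHull ℝ (V : Set E) ↔ ∀ d, ⟪u, d⟫ ≤ V.sup' hV (⟪·, d⟫) := by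
  constructor
  · intro hu d
    have hlin : IsLinearMap ℝ fun z : E => ⟪z, d⟫ :=
      ⟨fun a b => inner_add_left a b d, fun c a => real_inner_smul_left a d c⟩
    exact convexHull_min (fun w hw => le_sup' (⟪·, d⟫) hw) (convex_halfSpace_le hlin _) hu
  · intro hsupp
    by_contra hu
    obtain ⟨f, r, hfV, hfu⟩ := geometric_hahn_banach_closed_point (convex_convexHull ℝ _)
      ((V : Set E).toFinite.isClosed_convexHull ℝ) hu
    set d := (InnerProductSpace.toDual ℝ E).symm f
    have hfd : ∀ z, f z = ⟪z, d⟫ := fun z => by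
      rw [real_inner_comm, InnerProductSpace.toDual_symm_apply]
    obtain ⟨w, hw, hwd⟩ := V.exists_mem_eq_sup' hV (⟪·, d⟫)
    have hfw := hfV w (subset_convexHull ℝ _ hw)
    have := hsupp d
    rw [hfd] at hfw hfu
    linarith

end Finset

theorem fenchel_eq_of_hasGradientAt {n : ℕ} {g : EuclideanSpace ℝ (Fin n) → ℝ}
    {x G : EuclideanSpace ℝ (Fin n)} (hconv : ConvexOn ℝ univ g) (hg : HasGradientAt g G x) :
    fenchel g G = ⟪G, x⟫ - g x := by
  rw [fenchel, iSup]
  refine IsGreatest.csSup_eq ⟨⟨x, rfl⟩, ?_⟩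
  rintro _ ⟨y, rfl⟩
  have := hconv.inner_sub_le_of_hasGradientAt hg y
  rw [inner_sub_right] at this
  linarith

theorem stmt8_general {n : ℕ} (g : EuclideanSpace ℝ (Fin n) → ℝ)
    (hsc : ∃ α > (0 : ℝ), ConvexOn ℝ Set.univ (fun x => g x - α / 2 * ‖x‖ ^ 2))
    (V : Finset (EuclideanSpace ℝ (Fin n))) (hV : V.Nonempty)
    (xstar gx : EuclideanSpace ℝ (Fin n))
    (hgrad : HasGradientAt g gx xstar)
    (hmin : ∀ y, g xstar + V.sup' hV (fun w => ⟪w, xstar⟫) ≤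
        g y + V.sup' hV (fun w => ⟪w, y⟫)) :
    -gx ∈ convexHull ℝ (V : Set (EuclideanSpace ℝ (Fin n))) ∧
    ∀ w ∈ convexHull ℝ (V : Set (EuclideanSpace ℝ (Fin n))),
      -(fenchel g (-w)) ≤ -(fenchel g gx) := by
  obtain ⟨α, hα, hconv⟩ := hsc
  have hsc : StrongConvexOn univ α g := strongConvexOn_iff_convex.2 hconv
  have hopt : IsMinOn (g + fun y => V.sup' hV (⟪·, y⟫)) univ xstar := fun y _ => hmin y
  have hsub (y) : ⟪-gx, y - xstar⟫ ≤ V.sup' hV (⟪·, y⟫) - V.sup' hV (⟪·, xstar⟫) :=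
    hopt.neg_inner_sub_le_of_hasGradientAt hgrad (V.convexOn_sup'_inner hV) y
  have hmem : -gx ∈ convexHull ℝ (V : Set (EuclideanSpace ℝ (Fin n))) := by
    refine (V.mem_convexHull_iff_forall_inner_le_sup' hV).2 fun d => ?_
    have := hsub (xstar + d)
    rw [add_sub_cancel_left] at this
    linarith [V.sup'_inner_add_le hV xstar d]
  refine ⟨hmem, fun w hw => neg_le_neg ?_⟩
  have hx : V.sup' hV (⟪·, xstar⟫) ≤ ⟪-gx, xstar⟫ := by
    have := hsub 0
    simp only [zero_sub, inner_neg_right, inner_zero_right, Finset.sup'_const] at this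
    linarith
  have hwx := (V.mem_convexHull_iff_forall_inner_le_sup' hV).1 hw xstar
  calc fenchel g gx = ⟪gx, xstar⟫ - g xstar :=
        fenchel_eq_of_hasGradientAt (hsc.strictConvexOn hα).convexOn hgrad
    _ ≤ ⟪-w, xstar⟫ - g xstar := by
        rw [inner_neg_left] at hx ⊢
        linarith
    _ ≤ fenchel g (-w) := le_ciSup (hsc.bddAbove_range_inner_sub hα hgrad (-w)) xstar

/-- Dual solution from primal: if `g : ℝⁿ → ℝ` is differentiable and strongly convex and
`x⋆` minimizes `g x + max_{w ∈ 𝒱} ⟪w, x⟫`, then `w⋆ = -∇g(x⋆)` lies in `conv 𝒱` and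
maximizes `-g*(-w)` over `conv 𝒱`. -/
theorem stmt8 {n : ℕ} (g : EuclideanSpace ℝ (Fin n) → ℝ)
    (hlsc : LowerSemicontinuous g)
    (hsc : ∃ α > (0 : ℝ), ConvexOn ℝ Set.univ (fun x => g x - α / 2 * ‖x‖ ^ 2))
    (V : Finset (EuclideanSpace ℝ (Fin n))) (hV : V.Nonempty)
    (xstar gx : EuclideanSpace ℝ (Fin n))
    (hgrad : HasGradientAt g gx xstar)
    (hmin : ∀ y, g xstar + V.sup' hV (fun w => ⟪w, xstar⟫) ≤
        g y + V.sup' hV (fun w => ⟪w, y⟫)) :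
    -gx ∈ convexHull ℝ (V : Set (EuclideanSpace ℝ (Fin n))) ∧
    ∀ w ∈ convexHull ℝ (V : Set (EuclideanSpace ℝ (Fin n))),
      -(fenchel g (-w)) ≤ -(fenchel g gx) :=
  stmt8_general g hsc V hV xstar gx hgrad hmin
end

section
/- Restriction to the active set preserves the minimizer: let g : ℝⁿ → ℝ be strongly convex, 𝒱 ⊆ ℝⁿ finite nonempty, x† the minimizer of g(x) + max_{w ∈ 𝒱} ⟨w, x⟩, and 𝒜 = {w ∈ 𝒱 : ⟨w, x†⟩ = max_{v ∈ 𝒱} ⟨v, x†⟩}. Then x† is also the unique minimizer of g(x) + max_{w ∈ 𝒜} ⟨w, x⟩, and both problems have the same optimal value. -/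
open scoped RealInnerProductSpace Classical

/-- Restriction to the active set preserves the minimizer: if `x†` minimizes
`g x + max_{w ∈ 𝒱} ⟪w, x⟫` with `g` strongly convex, and `𝒜` is the active set at `x†`,
then the active-set problem has the same value at `x†` and `x†` is its unique minimizer. -/
theorem stmt12 {n : ℕ} (g : EuclideanSpace ℝ (Fin n) → ℝ)
    (hsc : ∃ α > (0 : ℝ), ConvexOn ℝ Set.univ (fun x => g x - α / 2 * ‖x‖ ^ 2))
    (V : Finset (EuclideanSpace ℝ (Fin n))) (hV : V.Nonempty)
    (xdag : EuclideanSpace ℝ (Fin n))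
    (hmin : ∀ y, g xdag + V.sup' hV (fun w => ⟪w, xdag⟫) ≤
        g y + V.sup' hV (fun w => ⟪w, y⟫))
    (A : Finset (EuclideanSpace ℝ (Fin n)))
    (hA : A = V.filter (fun w => ⟪w, xdag⟫ = V.sup' hV fun v => ⟪v, xdag⟫))
    (hAne : A.Nonempty) :
    A.sup' hAne (fun w => ⟪w, xdag⟫) = V.sup' hV (fun w => ⟪w, xdag⟫) ∧
    (∀ y, g xdag + A.sup' hAne (fun w => ⟪w, xdag⟫) ≤
        g y + A.sup' hAne (fun w => ⟪w, y⟫)) ∧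
    (∀ y, (∀ z, g y + A.sup' hAne (fun w => ⟪w, y⟫) ≤
        g z + A.sup' hAne (fun w => ⟪w, z⟫)) → y = xdag) := by
  classical
  obtain ⟨α, hα, hconv⟩ := hsc
  have hsco : StrongConvexOn Set.univ α g := strongConvexOn_iff_convex.mpr hconv
  have hgconv : ConvexOn ℝ Set.univ g := hsco.convexOn (fun r => by positivity)
  have hgstrict : StrictConvexOn ℝ Set.univ g := hsco.strictConvexOn hα
  set S : ℝ := V.sup' hV (fun v => ⟪v, xdag⟫) with hS
  set f : EuclideanSpace ℝ (Fin n) → ℝ := fun x => A.sup' hAne (fun w => ⟪w, x⟫) with hf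
  have hAsub : A ⊆ V := by rw [hA]; exact Finset.filter_subset _ _
  have hAmem : ∀ w ∈ A, ⟪w, xdag⟫ = S := by
    intro w hw; rw [hA] at hw; exact (Finset.mem_filter.mp hw).2
  -- Part 1
  have h1 : f xdag = S := by
    apply le_antisymm
    · exact Finset.sup'_le _ _ fun w hw => (hAmem w hw).le
    · obtain ⟨w0, hw0⟩ := hAne
      calc S = ⟪w0, xdag⟫ := (hAmem w0 hw0).symm
        _ ≤ f xdag := Finset.le_sup' (fun w => ⟪w, xdag⟫) hw0
  -- convexity of f
  have hfconv : ∀ (a b : ℝ) (x y : EuclideanSpace ℝ (Fin n)), 0 ≤ a → 0 ≤ b → a + b = 1 →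
      f (a • x + b • y) ≤ a * f x + b * f y := by
    intro a b x y ha hb hab
    apply Finset.sup'_le
    intro w hw
    have : ⟪w, a • x + b • y⟫ = a * ⟪w, x⟫ + b * ⟪w, y⟫ := by
      rw [inner_add_right, real_inner_smul_right, real_inner_smul_right]
    rw [this]
    have h1 : ⟪w, x⟫ ≤ f x := Finset.le_sup' (fun w => ⟪w, x⟫) hw
    have h2 : ⟪w, y⟫ ≤ f y := Finset.le_sup' (fun w => ⟪w, y⟫) hw
    nlinarith
  -- Part 2
  have h2 : ∀ y, g xdag + f xdag ≤ g y + f y := by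
    intro y
    by_cases hy : y = xdag
    · rw [hy]
    -- choose t small
    set C : ℝ := V.sup' hV (fun v => |⟪v, y - xdag⟫|) with hC
    have hC0 : 0 ≤ C := by
      obtain ⟨v0, hv0⟩ := hV
      exact le_trans (abs_nonneg _) (Finset.le_sup' (fun v => |⟪v, y - xdag⟫|) hv0)
    by_cases hVA : (V \ A).Nonempty
    case neg =>
      -- A = V
      have hVsub : V ⊆ A := by
        intro v hv
        by_contra hvA
        exact hVA ⟨v, Finset.mem_sdiff.mpr ⟨hv, hvA⟩⟩
      have hAV : A = V := le_antisymm hAsub hVsub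
      have hfV : ∀ x, f x = V.sup' hV (fun w => ⟪w, x⟫) := by
        intro x; simp only [hf]; exact Finset.sup'_congr hAne hAV (fun _ _ => rfl)
      rw [hfV, hfV]; exact hmin y
    case pos =>
    set δ : ℝ := (V \ A).inf' hVA (fun v => S - ⟪v, xdag⟫) with hδ
    have hδ0 : 0 < δ := by
      rw [hδ, Finset.lt_inf'_iff]
      intro v hv
      obtain ⟨hvV, hvA⟩ := Finset.mem_sdiff.mp hv
      have hle : ⟪v, xdag⟫ ≤ S := Finset.le_sup' (fun v => ⟪v, xdag⟫) hvV
      have hne : ⟪v, xdag⟫ ≠ S := by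
        intro h; exact hvA (by rw [hA]; exact Finset.mem_filter.mpr ⟨hvV, h⟩)
      linarith [lt_of_le_of_ne hle hne]
    set t : ℝ := min (1/2) (δ / (2 * (C + 1))) with ht
    have ht0 : 0 < t := by
      apply lt_min (by norm_num)
      positivity
    have ht1 : t ≤ 1 := le_trans (min_le_left _ _) (by norm_num)
    have htC : 2 * t * C ≤ δ := by
      have h : t ≤ δ / (2 * (C + 1)) := min_le_right _ _
      have h2 : 0 < 2 * (C + 1) := by linarith
      rw [le_div_iff₀ h2] at h
      nlinarith
    set xt : EuclideanSpace ℝ (Fin n) := xdag + t • (y - xdag) with hxt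
    have hxt' : xt = (1 - t) • xdag + t • y := by
      rw [hxt]; module
    have hinner : ∀ v : EuclideanSpace ℝ (Fin n),
        ⟪v, xt⟫ = ⟪v, xdag⟫ + t * ⟪v, y - xdag⟫ := by
      intro v; rw [hxt, inner_add_right, real_inner_smul_right]
    -- f xt ≥ S - t*C
    obtain ⟨w0, hw0⟩ := hAne
    have hfxt_lb : S - t * C ≤ f xt := by
      have h1 : ⟪w0, xt⟫ ≤ f xt := Finset.le_sup' (fun w => ⟪w, xt⟫) hw0
      have h2 : |⟪w0, y - xdag⟫| ≤ C := Finset.le_sup' (fun v => |⟪v, y - xdag⟫|) (hAsub hw0)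
      have h3 := hinner w0
      have h4 := hAmem w0 hw0
      have h5 : -C ≤ ⟪w0, y - xdag⟫ := (abs_le.mp h2).1
      nlinarith
    -- sup over V at xt equals f at xt
    have hsupV : V.sup' hV (fun w => ⟪w, xt⟫) ≤ f xt := by
      apply Finset.sup'_le
      intro v hv
      by_cases hvA : v ∈ A
      · exact Finset.le_sup' (fun w => ⟪w, xt⟫) hvA
      · have hvd : v ∈ V \ A := Finset.mem_sdiff.mpr ⟨hv, hvA⟩
        have h1 : δ ≤ S - ⟪v, xdag⟫ := Finset.inf'_le _ hvd
        have h2 : |⟪v, y - xdag⟫| ≤ C := Finset.le_sup' (fun v => |⟪v, y - xdag⟫|) hv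
        have h3 := hinner v
        have h4 : ⟪v, y - xdag⟫ ≤ C := (abs_le.mp h2).2
        nlinarith
    have hchain : g xdag + f xdag ≤ g xt + f xt := by
      calc g xdag + f xdag = g xdag + S := by rw [h1]
        _ ≤ g xt + V.sup' hV (fun w => ⟪w, xt⟫) := hmin xt
        _ ≤ g xt + f xt := by linarith
    have hgc : g xt ≤ (1 - t) * g xdag + t * g y := by
      have := hgconv.2 (Set.mem_univ xdag) (Set.mem_univ y)
        (by linarith : (0:ℝ) ≤ 1 - t) ht0.le (by ring)
      rw [← hxt'] at this
      simpa using this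
    have hfc : f xt ≤ (1 - t) * f xdag + t * f y := by
      rw [hxt']; exact hfconv _ _ _ _ (by linarith) ht0.le (by ring)
    have : t * (g xdag + f xdag) ≤ t * (g y + f y) := by nlinarith
    exact le_of_mul_le_mul_left (by linarith) ht0
  refine ⟨h1, h2, ?_⟩
  intro y hy
  by_contra hne
  have heq : g y + f y = g xdag + f xdag := le_antisymm (hy xdag) (h2 y)
  set m := (1/2 : ℝ) • y + (1/2 : ℝ) • xdag with hm
  have hgm : g m < (1/2) * g y + (1/2) * g xdag := by
    have := hgstrict.2 (Set.mem_univ y) (Set.mem_univ xdag) hne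
      (by norm_num : (0:ℝ) < 1/2) (by norm_num : (0:ℝ) < 1/2) (by norm_num)
    simpa [hm] using this
  have hfm : f m ≤ (1/2) * f y + (1/2) * f xdag := hfconv _ _ _ _ (by norm_num) (by norm_num) (by norm_num)
  have := hy m
  nlinarith
end

section
/- Strict increase of lower bounds: let g : ℝⁿ → ℝ be strongly convex, 𝒱 ⊆ ℝⁿ finite nonempty, x† the unique minimizer of g(x) + max_{w ∈ 𝒱} ⟨w, x⟩ with active set 𝒜, and let v ∈ ℝⁿ satisfy ⟨v, x†⟩ > max_{w ∈ 𝒱} ⟨w, x†⟩. Then inf_x (g(x) + max_{w ∈ 𝒜 ∪ {v}} ⟨w, x⟩) > inf_x (g(x) + max_{w ∈ 𝒱} ⟨w, x⟩). -/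
open scoped RealInnerProductSpace Classical

open Filter Topology

/-!
Cuts inactive at `x†` stay inactive nearby, so `x†` is a local, hence (by convexity) global,
minimizer of `f_𝒜 = g + max_{w ∈ 𝒜} ⟪w, ·⟫`, and strong convexity upgrades this to quadratic
growth `f_𝒜 x ≥ f_𝒜 x† + α/4 ‖x - x†‖²`. The new cut raises `f_𝒜` by at least the positive part
of `ψ x = ⟪v, x⟫ - max_{w ∈ 𝒜} ⟪w, x⟫`, a continuous function with `ψ x† > 0`. Near `x†` this
gain, and far from `x†` the quadratic growth, keep the new model uniformly above
`f_𝒜 x† = f_𝒱 x†`.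
-/

section ActiveSet

variable {ι X : Type*} (s : Finset ι) (hs : s.Nonempty) (f : ι → X → ℝ)

noncomputable def activeSet (x : X) : Finset ι :=
  s.filter fun i => f i x = s.sup' hs (f · x)

variable {s hs f}

lemma activeSet_subset (x : X) : activeSet s hs f x ⊆ s := Finset.filter_subset _ _

lemma activeSet_nonempty (x : X) : (activeSet s hs f x).Nonempty := by
  obtain ⟨i, hi, hmax⟩ := Finset.exists_mem_eq_sup' hs (f · x)
  exact ⟨i, Finset.mem_filter.2 ⟨hi, hmax.symm⟩⟩

lemma sup'_activeSet (x : X) :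
    (activeSet s hs f x).sup' (activeSet_nonempty x) (f · x) = s.sup' hs (f · x) := by
  refine le_antisymm (Finset.sup'_le _ _ fun _ hi => (Finset.mem_filter.1 hi).2.le) ?_
  obtain ⟨i, hi⟩ := activeSet_nonempty (hs := hs) (f := f) x
  exact (Finset.mem_filter.1 hi).2 ▸ Finset.le_sup' (f · x) hi

lemma eventually_sup'_le_sup'_activeSet [TopologicalSpace X] {x : X}
    (hf : ∀ i ∈ s, ContinuousAt (f i) x) :
    ∀ᶠ y in 𝓝 x,
      s.sup' hs (f · y) ≤ (activeSet s hs f x).sup' (activeSet_nonempty x) (f · y) := by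
  set A := activeSet s hs f x
  have hA : ContinuousAt (fun y => A.sup' (activeSet_nonempty x) (f · y)) x :=
    ContinuousAt.finset_sup'_apply _ fun i hi => hf i (activeSet_subset x hi)
  have hinactive :
      ∀ i ∈ s \ A, ∀ᶠ y in 𝓝 x, f i y < A.sup' (activeSet_nonempty x) (f · y) := by
    intro i hi
    obtain ⟨his, hiA⟩ := Finset.mem_sdiff.1 hi
    refine (hf i his).eventually_lt hA ?_
    rw [sup'_activeSet]
    exact lt_of_le_of_ne (Finset.le_sup' (f · x) his)
      fun h => hiA (Finset.mem_filter.2 ⟨his, h⟩)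
  filter_upwards [(eventually_all_finset _).2 hinactive] with y hy
  refine Finset.sup'_le _ _ fun i hi => ?_
  by_cases hiA : i ∈ A
  · exact Finset.le_sup' (f · y) hiA
  · exact (hy i (Finset.mem_sdiff.2 ⟨hi, hiA⟩)).le

end ActiveSet

lemma ConvexOn.finset_sup' {𝕜 E β ι : Type*} [Semiring 𝕜] [PartialOrder 𝕜] [AddCommMonoid E]
    [LinearOrder β] [AddCommMonoid β] [IsOrderedAddMonoid β] [SMul 𝕜 E] [Module 𝕜 β]
    [PosSMulStrictMono 𝕜 β] {s : Set E} {t : Finset ι} (ht : t.Nonempty) {f : ι → E → β}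
    (hf : ∀ i ∈ t, ConvexOn 𝕜 s (f i)) : ConvexOn 𝕜 s (fun x => t.sup' ht (f · x)) := by
  simpa only [← Finset.sup'_apply] using
    Finset.sup'_induction ht f (p := ConvexOn 𝕜 s) (fun _ h₁ _ h₂ => h₁.sup h₂) hf

/-- Both objectives agree near `x`, and a local minimum of a convex function is global. -/
lemma add_sup'_activeSet_le_of_forall_le {E ι : Type*} [NormedAddCommGroup E] [NormedSpace ℝ E]
    {g : E → ℝ} {s : Finset ι} {hs : s.Nonempty} {f : ι → E → ℝ} {x : E}
    (hg : ConvexOn ℝ Set.univ g) (hf : ∀ i ∈ s, ConvexOn ℝ Set.univ (f i))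
    (hfc : ∀ i ∈ s, Continuous (f i))
    (hmin : ∀ y, g x + s.sup' hs (f · x) ≤ g y + s.sup' hs (f · y)) (y : E) :
    g x + (activeSet s hs f x).sup' (activeSet_nonempty x) (f · x) ≤
      g y + (activeSet s hs f x).sup' (activeSet_nonempty x) (f · y) := by
  set A := activeSet s hs f x
  have hlocal : IsLocalMin (fun y => g y + A.sup' (activeSet_nonempty x) (f · y)) x := by
    filter_upwards [eventually_sup'_le_sup'_activeSet fun i hi => (hfc i hi).continuousAt]
      with z hz
    linarith [hmin z, sup'_activeSet (hs := hs) (f := f) x]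
  refine IsMinOn.of_isLocalMin_of_convex_univ hlocal (hg.add ?_) y
  exact ConvexOn.finset_sup' _ fun i hi => hf i (activeSet_subset x hi)

lemma StrongConvexOn.add_convexOn {E : Type*} [NormedAddCommGroup E] [NormedSpace ℝ E]
    {s : Set E} {m : ℝ} {f g : E → ℝ} (hf : StrongConvexOn s m f) (hg : ConvexOn ℝ s g) :
    StrongConvexOn s m (f + g) := by
  have h := hf.add hg.uniformConvexOn_zero
  rwa [add_zero] at h

lemma StrongConvexOn.add_mul_norm_sub_sq_le_of_isMinOn {E : Type*} [NormedAddCommGroup E]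
    [NormedSpace ℝ E] {s : Set E} {m : ℝ} {f : E → ℝ} {x y : E} (hf : StrongConvexOn s m f)
    (hmin : IsMinOn f s x) (hx : x ∈ s) (hy : y ∈ s) :
    f x + m / 4 * ‖y - x‖ ^ 2 ≤ f y := by
  have hhalf : (0 : ℝ) ≤ 1 / 2 := by norm_num
  have hmid := hf.2 hy hx hhalf hhalf (by norm_num)
  have hle := isMinOn_iff.1 hmin _ (hf.1 hy hx hhalf hhalf (by norm_num))
  simp only [smul_eq_mul] at hmid hle
  linarith

lemma exists_pos_le_mul_dist_sq_add_max {X : Type*} [PseudoMetricSpace X] {ψ : X → ℝ} {x₀ : X}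
    {a : ℝ} (ha : 0 < a) (hψ : ContinuousAt ψ x₀) (hψx₀ : 0 < ψ x₀) :
    ∃ c > 0, ∀ y, c ≤ a * dist y x₀ ^ 2 + max (ψ y) 0 := by
  obtain ⟨δ, hδ, hnear⟩ :=
    Metric.eventually_nhds_iff.1 (hψ.eventually (lt_mem_nhds (half_lt_self hψx₀)))
  refine ⟨min (ψ x₀ / 2) (a * δ ^ 2), lt_min (half_pos hψx₀) (by positivity), fun y => ?_⟩
  have hsq : 0 ≤ a * dist y x₀ ^ 2 := by positivity
  rcases lt_or_ge (dist y x₀) δ with hy | hy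
  · have := hnear hy
    linarith [min_le_left (ψ x₀ / 2) (a * δ ^ 2), le_max_left (ψ y) 0]
  · have : a * δ ^ 2 ≤ a * dist y x₀ ^ 2 := by gcongr
    linarith [min_le_right (ψ x₀ / 2) (a * δ ^ 2), le_max_right (ψ y) 0]

/-- Strict increase of lower bounds: if `x†` minimizes `g x + max_{w ∈ 𝒱} ⟪w, x⟫` with
`g` strongly convex, `𝒜` is the active set at `x†`, and `v` is a new cut with
`⟪v, x†⟫ > max_{w ∈ 𝒱} ⟪w, x†⟫`, then the optimal value over `𝒜 ∪ {v}` is strictly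
larger than the optimal value over `𝒱` (expressed via a strict lower bound `m`). -/
theorem stmt14 {n : ℕ} (g : EuclideanSpace ℝ (Fin n) → ℝ)
    (hsc : ∃ α > (0 : ℝ), ConvexOn ℝ Set.univ (fun x => g x - α / 2 * ‖x‖ ^ 2))
    (V : Finset (EuclideanSpace ℝ (Fin n))) (hV : V.Nonempty)
    (xdag : EuclideanSpace ℝ (Fin n))
    (hmin : ∀ y, g xdag + V.sup' hV (fun w => ⟪w, xdag⟫) ≤
        g y + V.sup' hV (fun w => ⟪w, y⟫))
    (A : Finset (EuclideanSpace ℝ (Fin n)))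
    (hA : A = V.filter (fun w => ⟪w, xdag⟫ = V.sup' hV fun u => ⟪u, xdag⟫))
    (v : EuclideanSpace ℝ (Fin n))
    (hv : V.sup' hV (fun w => ⟪w, xdag⟫) < ⟪v, xdag⟫) :
    ∃ m : ℝ,
      (∀ x, m ≤ g x + (insert v A).sup' (Finset.insert_nonempty v A)
          (fun w => ⟪w, x⟫)) ∧
      g xdag + V.sup' hV (fun w => ⟪w, xdag⟫) < m := by
  obtain ⟨α, hα, hconv⟩ := hsc
  have hg : StrongConvexOn Set.univ α g := strongConvexOn_iff_convex.2 hconv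
  have hinner_conv (w : EuclideanSpace ℝ (Fin n)) : ConvexOn ℝ Set.univ (fun y => ⟪w, y⟫) :=
    (innerₛₗ ℝ w).convexOn convex_univ
  obtain rfl : A = activeSet V hV (fun w y => ⟪w, y⟫) xdag := hA
  set A := activeSet V hV (fun w y => ⟪w, y⟫) xdag
  have hA : A.Nonempty := activeSet_nonempty xdag
  let supA y := A.sup' hA (fun w => ⟪w, y⟫)
  have hsupA_xdag : supA xdag = V.sup' hV (fun w => ⟪w, xdag⟫) := sup'_activeSet xdag
  have hminA (y) : g xdag + supA xdag ≤ g y + supA y := add_sup'_activeSet_le_of_forall_le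
    (hg.convexOn fun r => by positivity) (fun w _ => hinner_conv w)
    (fun w _ => continuous_const.inner continuous_id) hmin y
  have hgrowth (y) : g xdag + supA xdag + α / 4 * ‖y - xdag‖ ^ 2 ≤ g y + supA y :=
    (hg.add_convexOn (ConvexOn.finset_sup' hA fun w _ => hinner_conv w)
      ).add_mul_norm_sub_sq_le_of_isMinOn (fun z _ => hminA z) trivial trivial
  obtain ⟨c, hc, hcle⟩ := exists_pos_le_mul_dist_sq_add_max (div_pos hα four_pos)
    (ψ := fun y => ⟪v, y⟫ - supA y) (x₀ := xdag) (by fun_prop) (by linarith)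
  refine ⟨g xdag + supA xdag + c, fun x => ?_, by linarith⟩
  rw [Finset.sup'_insert (H := hA)]
  change _ ≤ g x + (⟪v, x⟫ ⊔ supA x)
  have hmax : max (⟪v, x⟫ - supA x) 0 ≤ ⟪v, x⟫ ⊔ supA x - supA x :=
    max_le (by linarith [le_sup_left (a := ⟪v, x⟫) (b := supA x)])
      (by linarith [le_sup_right (a := ⟪v, x⟫) (b := supA x)])
  have hcx := hcle x
  rw [dist_eq_norm] at hcx
  linarith [hgrowth x]
end

section
/- Duality gap bound from dual suboptimality: let g : ℝⁿ → ℝ be β-strongly convex with conjugate g* (which is (1/β)-smooth), let K ⊆ ℝⁿ be a compact convex set of diameter M, let p⋆ = max_{w ∈ K} −g*(−w), and let w ∈ K with d = −g*(−w) and x = ∇g*(−w). Then the Frank–Wolfe gap satisfies max_{v ∈ K} ⟨v − w, x⟩ ≤ (p⋆ − d) + M²/(2β), and if p⋆ − d ≤ M²/(2β) then max_{v ∈ K} ⟨v − w, x⟩ ≤ M·√(2(p⋆ − d)/β). -/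
open scoped RealInnerProductSpace

/-!
Writing `g = h + (β/2)‖·‖²` with `h` convex, `‖z‖²/(2β) - g*(z)` is the infimum over `u` of the
jointly convex function `‖z - βu‖²/(2β) + h(u)`, hence convex; so `g*` is `(1/β)`-smooth and
`g*(-v) ≤ g*(-w) - ⟪v - w, x⟫ + ‖v - w‖²/(2β)`. Since `-g*(-v) ≤ p⋆`, this gives
`⟪v - w, x⟫ ≤ (p⋆ - d) + ‖v - w‖²/(2β)` for every `v ∈ K`. Applying it to `w + t(v - w) ∈ K`
and choosing the step `t` optimally yields the square-root bound.
-/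

open Set

lemma ConvexOn.exists_neg_mul_one_add_norm_le {E : Type*} [NormedAddCommGroup E]
    [NormedSpace ℝ E] [FiniteDimensional ℝ E] {f : E → ℝ} (hf : ConvexOn ℝ univ f) :
    ∃ C, ∀ u, -C * (1 + ‖u‖) ≤ f u := by
  have hcont : Continuous f := continuousOn_univ.mp (hf.continuousOn isOpen_univ)
  obtain ⟨m, hm⟩ := (isCompact_closedBall (0 : E) 1).bddBelow_image hcont.continuousOn
  have hball : ∀ u : E, ‖u‖ ≤ 1 → m ≤ f u := fun u hu => hm ⟨u, by simpa using hu, rfl⟩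
  refine ⟨|m| + |f 0|, fun u => ?_⟩
  have hm_abs := neg_abs_le m
  have hf0_abs := le_abs_self (f 0)
  rcases le_or_gt ‖u‖ 1 with hu | hu
  · nlinarith [hball u hu, abs_nonneg (f 0), norm_nonneg u, abs_nonneg m]
  have hu0 : 0 < ‖u‖ := one_pos.trans hu
  have hsphere : m ≤ ‖u‖⁻¹ * f u + (1 - ‖u‖⁻¹) * f 0 := by
    have hcomb := hf.2 (mem_univ u) (mem_univ 0) (inv_nonneg.2 hu0.le)
      (sub_nonneg.2 (inv_le_one_of_one_le₀ hu.le)) (add_sub_cancel _ _)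
    simp only [smul_zero, add_zero, smul_eq_mul] at hcomb
    refine (hball _ ?_).trans hcomb
    rw [norm_smul, norm_inv, norm_norm, inv_mul_cancel₀ hu0.ne']
  have hscaled : ‖u‖ * m ≤ f u + (‖u‖ - 1) * f 0 := by
    have := mul_le_mul_of_nonneg_left hsphere hu0.le
    rwa [mul_add, ← mul_assoc, ← mul_assoc, mul_inv_cancel₀ hu0.ne', one_mul, mul_one_sub,
      mul_inv_cancel₀ hu0.ne'] at this
  nlinarith [mul_le_mul_of_nonneg_left hf0_abs (sub_nonneg.2 hu.le),
    mul_le_mul_of_nonneg_left hm_abs hu0.le, abs_nonneg m, abs_nonneg (f 0)]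

lemma convexOn_univ_of_isGLB_range {E F : Type*} [AddCommGroup E] [Module ℝ E]
    [AddCommGroup F] [Module ℝ F] {Φ : E × F → ℝ} {G : E → ℝ} (hΦ : ConvexOn ℝ univ Φ)
    (hG : ∀ z, IsGLB (range fun u => Φ (z, u)) (G z)) : ConvexOn ℝ univ G := by
  refine ⟨convex_univ, fun z₁ _ z₂ _ a b ha hb hab => le_of_forall_pos_le_add fun ε hε => ?_⟩
  obtain ⟨_, ⟨u₁, rfl⟩, -, hu₁⟩ := (hG z₁).exists_between (lt_add_of_pos_right _ hε)
  obtain ⟨_, ⟨u₂, rfl⟩, -, hu₂⟩ := (hG z₂).exists_between (lt_add_of_pos_right _ hε)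
  calc G (a • z₁ + b • z₂) ≤ Φ (a • (z₁, u₁) + b • (z₂, u₂)) := (hG _).1 ⟨a • u₁ + b • u₂, rfl⟩
    _ ≤ a • Φ (z₁, u₁) + b • Φ (z₂, u₂) := hΦ.2 (mem_univ _) (mem_univ _) ha hb hab
    _ ≤ a • (G z₁ + ε) + b • (G z₂ + ε) := by gcongr
    _ = a • G z₁ + b • G z₂ + ε := by
      simp only [smul_eq_mul]
      linear_combination ε * hab

lemma ConvexOn.add_fderiv_sub_le {E : Type*} [NormedAddCommGroup E] [NormedSpace ℝ E]
    {f : E → ℝ} {f' : E →L[ℝ] ℝ} {y : E} (hf : ConvexOn ℝ univ f) (hy : HasFDerivAt f f' y)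
    (z : E) : f y + f' (z - y) ≤ f z := by
  have hline : ConvexOn ℝ univ (f ∘ AffineMap.lineMap (k := ℝ) y z) := by
    simpa using hf.comp_affineMap (AffineMap.lineMap (k := ℝ) y z)
  have hderiv : HasDerivAt (f ∘ AffineMap.lineMap (k := ℝ) y z) (f' (z - y)) 0 := by
    refine HasFDerivAt.comp_hasDerivAt _ ?_ AffineMap.hasDerivAt_lineMap
    simpa using hy
  have hslope := hline.le_slope_of_hasDerivAt (mem_univ 0) (mem_univ 1) one_pos hderiv
  simp only [slope_def_field, Function.comp_apply, AffineMap.lineMap_apply_one,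
    AffineMap.lineMap_apply_zero, sub_zero, div_one] at hslope
  linarith

lemma le_two_mul_sqrt_of_forall_mul_le {a ε c : ℝ}
    (h : ∀ t ∈ Ioc (0 : ℝ) 1, t * a ≤ ε + t ^ 2 * c) (hεc : ε ≤ c) : a ≤ 2 * √(ε * c) := by
  rcases le_or_gt a 0 with ha | ha
  · exact ha.trans (by positivity)
  have ha_le : a ≤ 2 * c := by linarith [h 1 ⟨one_pos, le_rfl⟩]
  have hc : 0 < c := by linarith
  have hopt := h (a / (2 * c)) ⟨by positivity, (div_le_one (by positivity)).2 ha_le⟩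
  rw [← div_le_iff₀' two_pos]
  refine Real.le_sqrt_of_sq_le ?_
  field_simp at hopt
  nlinarith [hopt]

section Fenchel

variable {n : ℕ} {g : EuclideanSpace ℝ (Fin n) → ℝ} {β : ℝ}

local notation "E" => EuclideanSpace ℝ (Fin n)

lemma bddAbove_range_inner_sub (hβ : 0 < β)
    (hsc : ConvexOn ℝ univ (fun x : E => g x - β / 2 * ‖x‖ ^ 2)) (z : E) :
    BddAbove (range fun u : E => ⟪z, u⟫ - g u) := by
  obtain ⟨C, hC⟩ := hsc.exists_neg_mul_one_add_norm_le
  refine ⟨(‖z‖ + C) ^ 2 / (2 * β) + C, ?_⟩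
  rintro _ ⟨u, rfl⟩
  have hquad : (‖z‖ + C) * ‖u‖ - β / 2 * ‖u‖ ^ 2 ≤ (‖z‖ + C) ^ 2 / (2 * β) := by
    rw [le_div_iff₀ (by positivity)]
    nlinarith [sq_nonneg (‖z‖ + C - β * ‖u‖)]
  nlinarith [hC u, real_inner_le_norm z u]

lemma inner_sub_le_fenchel_s18 (hβ : 0 < β)
    (hsc : ConvexOn ℝ univ (fun x : E => g x - β / 2 * ‖x‖ ^ 2)) (z u : E) :
    ⟪z, u⟫ - g u ≤ fenchel g z :=
  le_ciSup (bddAbove_range_inner_sub hβ hsc z) u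

lemma convexOn_sq_norm_div_sub_fenchel (hβ : 0 < β)
    (hsc : ConvexOn ℝ univ (fun x : E => g x - β / 2 * ‖x‖ ^ 2)) :
    ConvexOn ℝ univ (fun z : E => ‖z‖ ^ 2 / (2 * β) - fenchel g z) := by
  set Φ : E × E → ℝ := fun p => (2 * β)⁻¹ * ‖p.1 - β • p.2‖ ^ 2 + (g p.2 - β / 2 * ‖p.2‖ ^ 2)
  have hΦ : ConvexOn ℝ univ Φ := by
    have hsq : ConvexOn ℝ univ (fun y : E => ‖y‖ ^ 2) :=
      convexOn_univ_norm.pow (fun _ _ => norm_nonneg _) 2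
    exact ((hsq.comp_linearMap (LinearMap.fst ℝ E E - β • LinearMap.snd ℝ E E)).smul
      (by positivity)).add (hsc.comp_linearMap (LinearMap.snd ℝ E E))
  have hΦ_eq : ∀ z u : E, Φ (z, u) = ‖z‖ ^ 2 / (2 * β) - (⟪z, u⟫ - g u) := by
    intro z u
    simp only [Φ, ← real_inner_self_eq_norm_sq, inner_sub_left, inner_sub_right,
      real_inner_smul_left, real_inner_smul_right, real_inner_comm z u]
    field_simp
    ring
  refine convexOn_univ_of_isGLB_range hΦ fun z => ⟨?_, fun b hb => ?_⟩
  · rintro _ ⟨u, rfl⟩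
    dsimp only
    rw [hΦ_eq]
    linarith [inner_sub_le_fenchel_s18 hβ hsc z u]
  · have : fenchel g z ≤ ‖z‖ ^ 2 / (2 * β) - b :=
      ciSup_le fun u => by linarith [hb ⟨u, rfl⟩, hΦ_eq z u]
    linarith

lemma fenchel_le_add_inner_add_sq_norm (hβ : 0 < β)
    (hsc : ConvexOn ℝ univ (fun x : E => g x - β / 2 * ‖x‖ ^ 2))
    {x y : E} (hx : HasGradientAt (fenchel g) x y) (z : E) :
    fenchel g z ≤ fenchel g y + ⟪x, z - y⟫ + ‖z - y‖ ^ 2 / (2 * β) := by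
  have hG := ((hasStrictFDerivAt_norm_sq y).hasFDerivAt.mul_const (2 * β)⁻¹).sub hx.hasFDerivAt
  simp only [← div_eq_mul_inv] at hG
  have hfirst := (convexOn_sq_norm_div_sub_fenchel hβ hsc).add_fderiv_sub_le hG z
  simp only [mul_inv_rev, sub_apply, smul_apply, coe_innerSL_apply, nsmul_eq_mul,
    Nat.cast_ofNat, smul_eq_mul, InnerProductSpace.toDual_apply_apply] at hfirst
  have hexp : ‖z‖ ^ 2 = ‖y‖ ^ 2 + 2 * ⟪y, z - y⟫ + ‖z - y‖ ^ 2 := by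
    rw [← norm_add_sq_real, add_sub_cancel]
  rw [hexp] at hfirst
  field_simp at hfirst ⊢
  linarith

end Fenchel

theorem stmt18_general {n : ℕ} (g : EuclideanSpace ℝ (Fin n) → ℝ) (β : ℝ) (hβ : 0 < β)
    (hsc : ConvexOn ℝ Set.univ (fun x => g x - β / 2 * ‖x‖ ^ 2))
    (K : Set (EuclideanSpace ℝ (Fin n))) (hconv : Convex ℝ K)
    (M : ℝ) (hM : ∀ u ∈ K, ∀ v ∈ K, ‖u - v‖ ≤ M)
    (pstar : ℝ) (hp : IsGreatest ((fun v => -(fenchel g (-v))) '' K) pstar)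
    (w : EuclideanSpace ℝ (Fin n)) (hw : w ∈ K)
    (d : ℝ) (hd : d = -(fenchel g (-w)))
    (x : EuclideanSpace ℝ (Fin n)) (hx : HasGradientAt (fenchel g) x (-w)) :
    (∀ v ∈ K, ⟪v - w, x⟫ ≤ (pstar - d) + M ^ 2 / (2 * β)) ∧
    (pstar - d ≤ M ^ 2 / (2 * β) →
      ∀ v ∈ K, ⟪v - w, x⟫ ≤ M * Real.sqrt (2 * (pstar - d) / β)) := by
  have hgap : ∀ v ∈ K, ⟪v - w, x⟫ ≤ (pstar - d) + ‖v - w‖ ^ 2 / (2 * β) := by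
    intro v hv
    have hsmooth := fenchel_le_add_inner_add_sq_norm hβ hsc hx (-v)
    rw [neg_sub_neg, ← neg_sub, inner_neg_right, norm_neg, real_inner_comm] at hsmooth
    linarith [hp.2 ⟨v, hv, rfl⟩]
  have hdiam : ∀ v ∈ K, ‖v - w‖ ^ 2 ≤ M ^ 2 := fun v hv =>
    pow_le_pow_left₀ (norm_nonneg _) (hM v hv w hw) 2
  refine ⟨fun v hv => ?_, fun hsmall v hv => ?_⟩
  · linarith [hgap v hv, div_le_div_of_nonneg_right (hdiam v hv) (by positivity : 0 ≤ 2 * β)]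
  have hM0 : 0 ≤ M := (norm_nonneg _).trans (hM w hw w hw)
  have hstep : ∀ t ∈ Ioc (0 : ℝ) 1,
      t * ⟪v - w, x⟫ ≤ (pstar - d) + t ^ 2 * (M ^ 2 / (2 * β)) := by
    rintro t ⟨ht0, ht1⟩
    have := hgap _ (hconv.add_smul_sub_mem hw hv ⟨ht0.le, ht1⟩)
    rw [add_sub_cancel_left, real_inner_smul_left, norm_smul, mul_pow,
      Real.norm_of_nonneg ht0.le, mul_div_assoc] at this
    have hdiam' := div_le_div_of_nonneg_right (hdiam v hv) (by positivity : (0 : ℝ) ≤ 2 * β)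
    linarith [mul_le_mul_of_nonneg_left hdiam' (sq_nonneg t)]
  calc ⟪v - w, x⟫ ≤ 2 * √((pstar - d) * (M ^ 2 / (2 * β))) :=
        le_two_mul_sqrt_of_forall_mul_le hstep hsmall
    _ = M * √(2 * (pstar - d) / β) := by
      rw [show (pstar - d) * (M ^ 2 / (2 * β)) = (M / 2) ^ 2 * (2 * (pstar - d) / β) by
        field_simp, Real.sqrt_mul (by positivity), Real.sqrt_sq (by positivity)]
      ring

/-- Duality gap bound from dual suboptimality: for `g` `β`-strongly convex with conjugate
`g*`, `K` compact convex of diameter `M`, `p⋆ = max_{w ∈ K} -g*(-w)`, `w ∈ K`,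
`d = -g*(-w)` and `x = ∇g*(-w)`, the Frank–Wolfe gap satisfies
`max_{v ∈ K} ⟪v - w, x⟫ ≤ (p⋆ - d) + M²/(2β)`, and if `p⋆ - d ≤ M²/(2β)` then
`max_{v ∈ K} ⟪v - w, x⟫ ≤ M √(2(p⋆ - d)/β)`. -/
theorem stmt18 {n : ℕ} (g : EuclideanSpace ℝ (Fin n) → ℝ) (β : ℝ) (hβ : 0 < β)
    (hlsc : LowerSemicontinuous g)
    (hsc : ConvexOn ℝ Set.univ (fun x => g x - β / 2 * ‖x‖ ^ 2))
    (K : Set (EuclideanSpace ℝ (Fin n))) (hcomp : IsCompact K) (hconv : Convex ℝ K)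
    (M : ℝ) (hM : ∀ u ∈ K, ∀ v ∈ K, ‖u - v‖ ≤ M)
    (pstar : ℝ) (hp : IsGreatest ((fun v => -(fenchel g (-v))) '' K) pstar)
    (w : EuclideanSpace ℝ (Fin n)) (hw : w ∈ K)
    (d : ℝ) (hd : d = -(fenchel g (-w)))
    (x : EuclideanSpace ℝ (Fin n)) (hx : HasGradientAt (fenchel g) x (-w)) :
    (∀ v ∈ K, ⟪v - w, x⟫ ≤ (pstar - d) + M ^ 2 / (2 * β)) ∧
    (pstar - d ≤ M ^ 2 / (2 * β) →
      ∀ v ∈ K, ⟪v - w, x⟫ ≤ M * Real.sqrt (2 * (pstar - d) / β)) :=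
  stmt18_general g β hβ hsc K hconv M hM pstar hp w hw d hd x hx
end

section
/- Smoothness-based gap lower bound (key step in the sublinear gap bound): if h : ℝⁿ → ℝ is concave and L-smooth, K ⊆ ℝⁿ is convex with diameter M, w ∈ K, and G = max_{v ∈ K} ⟨v − w, ∇h(w)⟩ is the Frank–Wolfe gap, then max_{v ∈ K} h(v) − h(w) ≥ G − L M²/2, and if G ≤ L M² then max_{v ∈ K} h(v) − h(w) ≥ G²/(2 L M²). -/
/-!
Let `v ∈ K` attain the Frank–Wolfe gap `G`. Along the segment `w + γ (v - w)`, `γ ∈ [0, 1]`, which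
stays in `K`, the descent lemma for an `L`-Lipschitz gradient gives
`h (w + γ (v - w)) ≥ h w + γ G - L M² γ² / 2`. Taking `γ = 1` gives the first bound, and the
maximiser `γ = G / (L M²)`, admissible when `G ≤ L M²`, gives the second.
-/

open scoped RealInnerProductSpace NNReal

variable {E : Type*} [NormedAddCommGroup E] [InnerProductSpace ℝ E]

theorem HasGradientAt.hasDerivAt_comp_add_smul [CompleteSpace E] {f : E → ℝ} {f' x d : E} {t : ℝ}
    (hf : HasGradientAt f f' (x + t • d)) :
    HasDerivAt (fun s : ℝ => f (x + s • d)) ⟪f', d⟫ t := by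
  have hline : HasDerivAt (fun s : ℝ => x + s • d) d t := by
    simpa using ((hasDerivAt_id t).smul_const d).const_add x
  simpa [Function.comp_def] using hf.hasFDerivAt.comp_hasDerivAt t hline

theorem LipschitzWith.neg_mul_le_inner_sub {grad : E → E} {L : ℝ≥0} (hlip : LipschitzWith L grad)
    (x d : E) {t : ℝ} (ht : 0 ≤ t) :
    -(L * t * ‖d‖ ^ 2) ≤ ⟪d, grad (x + t • d) - grad x⟫ := by
  have hgrad : ‖grad (x + t • d) - grad x‖ ≤ L * (t * ‖d‖) := by
    simpa [dist_eq_norm, norm_smul, abs_of_nonneg ht] using hlip.dist_le_mul (x + t • d) x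
  calc -(L * t * ‖d‖ ^ 2) = -(‖d‖ * (L * (t * ‖d‖))) := by ring
    _ ≤ -(‖d‖ * ‖grad (x + t • d) - grad x‖) := by gcongr
    _ ≤ ⟪d, grad (x + t • d) - grad x⟫ := neg_le_of_abs_le (abs_real_inner_le_norm _ _)

theorem add_inner_sub_le_of_lipschitzWith_gradient [CompleteSpace E] {f : E → ℝ} {grad : E → E}
    (hgrad : ∀ y, HasGradientAt f (grad y) y) {L : ℝ≥0} (hlip : LipschitzWith L grad)
    (x d : E) :
    f x + ⟪d, grad x⟫ - L / 2 * ‖d‖ ^ 2 ≤ f (x + d) := by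
  set φ : ℝ → ℝ := fun t => f (x + t • d) - t * ⟪d, grad x⟫ + L * t ^ 2 * ‖d‖ ^ 2 / 2
  have hφ' : ∀ t, HasDerivAt φ (⟪d, grad (x + t • d) - grad x⟫ + L * t * ‖d‖ ^ 2) t := by
    intro t
    have := (((hgrad (x + t • d)).hasDerivAt_comp_add_smul).sub
      ((hasDerivAt_id t).mul_const ⟪d, grad x⟫)).add
      ((((hasDerivAt_pow 2 t).const_mul (L : ℝ)).mul_const (‖d‖ ^ 2)).div_const 2)
    refine this.congr_deriv ?_
    rw [inner_sub_right, real_inner_comm d]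
    ring
  have hmono : MonotoneOn φ (Set.Icc 0 1) := by
    refine monotoneOn_of_deriv_nonneg (convex_Icc 0 1)
      (fun t _ => (hφ' t).continuousAt.continuousWithinAt)
      (fun t _ => (hφ' t).differentiableAt.differentiableWithinAt) fun t ht => ?_
    rw [interior_Icc] at ht
    rw [(hφ' t).deriv]
    linarith [hlip.neg_mul_le_inner_sub x d ht.1.le]
  have := hmono (Set.left_mem_Icc.mpr zero_le_one) (Set.right_mem_Icc.mpr zero_le_one) zero_le_one
  simp only [φ] at this
  norm_num at this
  linarith

theorem add_mul_inner_sub_le_of_lipschitzWith_gradient [CompleteSpace E] {f : E → ℝ}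
    {grad : E → E} (hgrad : ∀ y, HasGradientAt f (grad y) y) {L : ℝ≥0}
    (hlip : LipschitzWith L grad) {v w : E} {M : ℝ} (hvw : ‖v - w‖ ≤ M) (γ : ℝ) :
    f w + γ * ⟪v - w, grad w⟫ - L * M ^ 2 * γ ^ 2 / 2 ≤ f (w + γ • (v - w)) := by
  have hnorm : ‖γ • (v - w)‖ ^ 2 ≤ γ ^ 2 * M ^ 2 := by
    rw [norm_smul, mul_pow, Real.norm_eq_abs, sq_abs]
    gcongr
  have := add_inner_sub_le_of_lipschitzWith_gradient hgrad hlip w (γ • (v - w))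
  rw [real_inner_smul_left] at this
  nlinarith [L.coe_nonneg]

theorem sq_div_le_of_forall_mul_sub_le {G C D : ℝ} (hG : 0 ≤ G) (hGC : G ≤ C)
    (hD : ∀ γ ∈ Set.Icc (0 : ℝ) 1, γ * G - C * γ ^ 2 / 2 ≤ D) :
    G ^ 2 / (2 * C) ≤ D := by
  rcases (hG.trans hGC).eq_or_lt with hC | hC
  · simpa [← hC] using hD 0 (by simp)
  · -- `G / C` maximises `γ ↦ γ * G - C * γ ^ 2 / 2`
    convert hD (G / C) ⟨div_nonneg hG hC.le, div_le_one_of_le₀ hGC hC.le⟩ using 1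
    field_simp
    ring

theorem stmt19_general {n : ℕ} (h : EuclideanSpace ℝ (Fin n) → ℝ)
    (grad : EuclideanSpace ℝ (Fin n) → EuclideanSpace ℝ (Fin n))
    (hgrad : ∀ w, HasGradientAt h (grad w) w)
    (L : ℝ) (hL : 0 ≤ L) (hlip : LipschitzWith L.toNNReal grad)
    (K : Set (EuclideanSpace ℝ (Fin n))) (hconv : Convex ℝ K)
    (M : ℝ) (hM : ∀ u ∈ K, ∀ v ∈ K, ‖u - v‖ ≤ M)
    (w : EuclideanSpace ℝ (Fin n)) (hw : w ∈ K)
    (G : ℝ) (hG : IsGreatest ((fun v => ⟪v - w, grad w⟫) '' K) G)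
    (hmaxval : ℝ) (hmax : IsGreatest (h '' K) hmaxval) :
    hmaxval - h w ≥ G - L * M ^ 2 / 2 ∧
    (G ≤ L * M ^ 2 → hmaxval - h w ≥ G ^ 2 / (2 * L * M ^ 2)) := by
  obtain ⟨v, hv, rfl⟩ := hG.1
  have hG_nonneg : 0 ≤ ⟪v - w, grad w⟫ := by simpa using hG.2 ⟨w, hw, rfl⟩
  have hstep : ∀ γ ∈ Set.Icc (0 : ℝ) 1,
      γ * ⟪v - w, grad w⟫ - L * M ^ 2 * γ ^ 2 / 2 ≤ hmaxval - h w := fun γ hγ => by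
    have hseg := add_mul_inner_sub_le_of_lipschitzWith_gradient hgrad hlip (hM v hv w hw) γ
    rw [Real.coe_toNNReal L hL] at hseg
    linarith [hmax.2 ⟨_, hconv.add_smul_sub_mem hw hv hγ, rfl⟩]
  refine ⟨by simpa using hstep 1 (by simp), fun hGLM => ?_⟩
  rw [mul_assoc]
  exact sq_div_le_of_forall_mul_sub_le hG_nonneg hGLM hstep

/-- Smoothness-based gap lower bound: if `h` is concave and `L`-smooth, `K` is convex
with diameter `M`, `w ∈ K`, and `G = max_{v ∈ K} ⟪v - w, ∇h(w)⟫` is the Frank–Wolfe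
gap, then `max_{v ∈ K} h v - h w ≥ G - L M²/2`, and if `G ≤ L M²` then
`max_{v ∈ K} h v - h w ≥ G²/(2 L M²)`. -/
theorem stmt19 {n : ℕ} (h : EuclideanSpace ℝ (Fin n) → ℝ)
    (hconc : ConcaveOn ℝ Set.univ h)
    (grad : EuclideanSpace ℝ (Fin n) → EuclideanSpace ℝ (Fin n))
    (hgrad : ∀ w, HasGradientAt h (grad w) w)
    (L : ℝ) (hL : 0 ≤ L) (hlip : LipschitzWith L.toNNReal grad)
    (K : Set (EuclideanSpace ℝ (Fin n))) (hconv : Convex ℝ K)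
    (M : ℝ) (hM : ∀ u ∈ K, ∀ v ∈ K, ‖u - v‖ ≤ M)
    (w : EuclideanSpace ℝ (Fin n)) (hw : w ∈ K)
    (G : ℝ) (hG : IsGreatest ((fun v => ⟪v - w, grad w⟫) '' K) G)
    (hmaxval : ℝ) (hmax : IsGreatest (h '' K) hmaxval) :
    hmaxval - h w ≥ G - L * M ^ 2 / 2 ∧
    (G ≤ L * M ^ 2 → hmaxval - h w ≥ G ^ 2 / (2 * L * M ^ 2)) :=
  stmt19_general h grad hgrad L hL hlip K hconv M hM w hw G hG hmaxval hmax
end
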